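/- arXiv:2202.11153 — 4 statements merged into one kernel-verified Lean document; each statement's English description precedes it below -/
import Mathlib

section
/- On the cone (ℝ₊ × M, g̃ = s² g₊ - ds²) with weighted function f̃ = s f₊, where (M^{d+1}, g₊, f₊, m, μ) is a smooth metric measure space, the Bakry–Émery Ricci tensor of g̃ restricted to directions tangent to M satisfies Ric_φ^m(g̃) = Ric_φ^m(g₊) + (d+m) g₊. -/
open Matrix BigOperators

noncomputable section

/-- A metric (or 2-tensor) field on a coordinate patch of `ℝⁿ`, given by its
component matrix at each point. -/
abbrev MetricField (n : ℕ) := (Fin n → ℝ) → Matrix (Fin n) (Fin n) ℝ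

/-- Partial derivative of a scalar function in the `i`-th coordinate direction. -/
def pd {n : ℕ} (i : Fin n) (h : (Fin n → ℝ) → ℝ) (x : Fin n → ℝ) : ℝ :=
  fderiv ℝ h x (Pi.single i 1)

/-- Christoffel symbols of the first kind `Γ_{ijk}`. -/
def ChristoffelLow {n : ℕ} (g : MetricField n) (i j k : Fin n) (x : Fin n → ℝ) : ℝ :=
  (pd i (fun y => g y j k) x + pd j (fun y => g y i k) x - pd k (fun y => g y i j) x) / 2

/-- Christoffel symbols of the second kind `Γ^l_{ij}`. -/
def Christoffel {n : ℕ} (g : MetricField n) (l i j : Fin n) (x : Fin n → ℝ) : ℝ :=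
  ∑ k, (g x)⁻¹ l k * ChristoffelLow g i j k x

/-- Riemann curvature tensor `R^l_{ijk}` (type (1,3)). -/
def RiemannUp {n : ℕ} (g : MetricField n) (l i j k : Fin n) (x : Fin n → ℝ) : ℝ :=
  pd j (fun y => Christoffel g l k i y) x - pd k (fun y => Christoffel g l j i y) x
    + ∑ p, Christoffel g l j p x * Christoffel g p k i x
    - ∑ p, Christoffel g l k p x * Christoffel g p j i x

/-- Riemann curvature tensor `R_{ijkl}` (type (0,4)). -/
def RiemannLow {n : ℕ} (g : MetricField n) (i j k l : Fin n) (x : Fin n → ℝ) : ℝ :=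
  ∑ m, g x i m * RiemannUp g m j k l x

/-- Ricci tensor `R_{ij} = ∂_L Γ^L_{ij} - ∂_i Γ^L_{Lj} + Γ^P_{ij} Γ^L_{LP} - Γ^P_{Lj} Γ^L_{iP}`. -/
def RicciT {n : ℕ} (g : MetricField n) (i j : Fin n) (x : Fin n → ℝ) : ℝ :=
  (∑ l, pd l (fun y => Christoffel g l i j y) x)
    - (∑ l, pd i (fun y => Christoffel g l l j y) x)
    + (∑ p, ∑ l, Christoffel g p i j x * Christoffel g l l p x)
    - (∑ p, ∑ l, Christoffel g p l j x * Christoffel g l i p x)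

/-- Covariant Hessian `(∇²f)_{ij}` with respect to the metric `g`. -/
def HessT {n : ℕ} (g : MetricField n) (f : (Fin n → ℝ) → ℝ) (i j : Fin n) (x : Fin n → ℝ) : ℝ :=
  pd i (fun y => pd j f y) x - ∑ k, Christoffel g k i j x * pd k f x

/-- Laplacian `Δf = g^{ij}(∇²f)_{ij}`. -/
def LapT {n : ℕ} (g : MetricField n) (f : (Fin n → ℝ) → ℝ) (x : Fin n → ℝ) : ℝ :=
  ∑ i, ∑ j, (g x)⁻¹ i j * HessT g f i j x

/-- Squared gradient norm `|∇f|² = g^{ij} ∂_i f ∂_j f`. -/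
def GradSq {n : ℕ} (g : MetricField n) (f : (Fin n → ℝ) → ℝ) (x : Fin n → ℝ) : ℝ :=
  ∑ i, ∑ j, (g x)⁻¹ i j * pd i f x * pd j f x

/-- Scalar curvature `R = g^{ij} R_{ij}`. -/
def ScalarT {n : ℕ} (g : MetricField n) (x : Fin n → ℝ) : ℝ :=
  ∑ i, ∑ j, (g x)⁻¹ i j * RicciT g i j x

/-- Bakry–Émery Ricci tensor `Ric - (m/f) ∇²f`. -/
def BERic {n : ℕ} (g : MetricField n) (m : ℝ) (f : (Fin n → ℝ) → ℝ) (i j : Fin n)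
    (x : Fin n → ℝ) : ℝ :=
  RicciT g i j x - (m / f x) * HessT g f i j x

/-- The weighted quantity `F_φ^m = f Δf + (m-1)(|∇f|² - μ)`. -/
def Fphi {n : ℕ} (g : MetricField n) (m μ : ℝ) (f : (Fin n → ℝ) → ℝ) (x : Fin n → ℝ) : ℝ :=
  f x * LapT g f x + (m - 1) * (GradSq g f x - μ)

/-- The weighted scalar curvature `R_φ^m = R - (2m/f)Δf - (m(m-1)/f²)(|∇f|² - μ)`. -/
def Rphi {n : ℕ} (g : MetricField n) (m μ : ℝ) (f : (Fin n → ℝ) → ℝ) (x : Fin n → ℝ) : ℝ :=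
  ScalarT g x - (2 * m / f x) * LapT g f x
    - (m * (m - 1) / (f x) ^ 2) * (GradSq g f x - μ)

/-- Covariant derivative `∇_k P_{ij}` of a 2-tensor field `P` with respect to `g`. -/
def CovD2 {n : ℕ} (g P : MetricField n) (k i j : Fin n) (x : Fin n → ℝ) : ℝ :=
  pd k (fun y => P y i j) x - (∑ l, Christoffel g l k i x * P x l j)
    - (∑ l, Christoffel g l k j x * P x i l)

/-- Embedding of the `M`-indices into the ambient indices `{0} ∪ M ∪ {∞}`:
index `0` is the `t`-direction and `Fin.last (d+1)` is the `ρ`-direction. -/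
def emb {d : ℕ} (i : Fin d) : Fin (d + 2) := i.succ.castSucc

/-- The `M`-coordinates of an ambient point. -/
def mcoord {d : ℕ} (x : Fin (d + 2) → ℝ) : Fin d → ℝ := fun i => x (emb i)

/-- The straight and normal ambient metric `g̃ = 2ρ dt² + 2t dρ dt + t² g_ρ` built from a
one-parameter family `g_ρ` of metrics on `M`; coordinates `(t, x, ρ)` with `t` indexed by `0`
and `ρ` indexed by `Fin.last (d+1)`. -/
def ambMetric {d : ℕ} (gf : ℝ → (Fin d → ℝ) → Matrix (Fin d) (Fin d) ℝ) :
    MetricField (d + 2) := fun x =>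
  Matrix.of fun I J =>
    (if I = 0 ∧ J = 0 then 2 * x (Fin.last (d + 1)) else 0)
      + (if (I = 0 ∧ J = Fin.last (d + 1)) ∨ (I = Fin.last (d + 1) ∧ J = 0) then x 0 else 0)
      + (x 0) ^ 2 * ∑ i, ∑ j,
          (if I = emb i ∧ J = emb j then gf (x (Fin.last (d + 1))) (mcoord x) i j else 0)

/-- The ambient weighted function `f̃ = t f_ρ`. -/
def ambF {d : ℕ} (ff : ℝ → (Fin d → ℝ) → ℝ) (x : Fin (d + 2) → ℝ) : ℝ :=
  x 0 * ff (x (Fin.last (d + 1))) (mcoord x)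

/-- The cone metric `g̃ = -ds² + s² g₊` on `ℝ₊ × M` where `M` is `(d+1)`-dimensional;
the coordinate `s` is indexed by `0`. -/
def coneMetric {d : ℕ}
    (gp : (Fin (d + 1) → ℝ) → Matrix (Fin (d + 1)) (Fin (d + 1)) ℝ) :
    MetricField (d + 2) := fun x =>
  Matrix.of fun I J =>
    (if I = 0 ∧ J = 0 then -1 else 0)
      + (x 0) ^ 2 * ∑ i, ∑ j,
          (if I = Fin.succ i ∧ J = Fin.succ j then gp (x ∘ Fin.succ) i j else 0)

/-- The cone weighted function `f̃ = s f₊`. -/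
def coneF {d : ℕ} (fp : (Fin (d + 1) → ℝ) → ℝ) (x : Fin (d + 2) → ℝ) : ℝ :=
  x 0 * fp (x ∘ Fin.succ)

namespace Aux

variable {n : ℕ}

theorem pd_congr_nhds {i : Fin n} {h h' : (Fin n → ℝ) → ℝ} {x : Fin n → ℝ}
    (he : h =ᶠ[nhds x] h') : pd i h x = pd i h' x := by
  unfold pd; rw [he.fderiv_eq]

theorem pd_const {i : Fin n} (c : ℝ) (x : Fin n → ℝ) : pd i (fun _ => c) x = 0 := by
  simp [pd]

theorem pd_add {i : Fin n} {a b : (Fin n → ℝ) → ℝ} {x : Fin n → ℝ}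
    (ha : DifferentiableAt ℝ a x) (hb : DifferentiableAt ℝ b x) :
    pd i (fun y => a y + b y) x = pd i a x + pd i b x := by
  simp [pd, fderiv_fun_add ha hb]

theorem pd_sub {i : Fin n} {a b : (Fin n → ℝ) → ℝ} {x : Fin n → ℝ}
    (ha : DifferentiableAt ℝ a x) (hb : DifferentiableAt ℝ b x) :
    pd i (fun y => a y - b y) x = pd i a x - pd i b x := by
  simp [pd, fderiv_fun_sub ha hb]

theorem pd_mul {i : Fin n} {a b : (Fin n → ℝ) → ℝ} {x : Fin n → ℝ}
    (ha : DifferentiableAt ℝ a x) (hb : DifferentiableAt ℝ b x) :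
    pd i (fun y => a y * b y) x = pd i a x * b x + a x * pd i b x := by
  simp [pd, fderiv_fun_mul ha hb]; ring

theorem pd_sum {i : Fin n} {s : Finset (Fin n)} {a : Fin n → (Fin n → ℝ) → ℝ} {x : Fin n → ℝ}
    (ha : ∀ k, DifferentiableAt ℝ (a k) x) :
    pd i (fun y => ∑ k ∈ s, a k y) x = ∑ k ∈ s, pd i (a k) x := by
  unfold pd
  rw [fderiv_fun_sum (fun k _ => ha k)]
  simp

/-- tail map as a continuous linear map -/
def tailL : (Fin (n + 1) → ℝ) →L[ℝ] (Fin n → ℝ) :=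
  ContinuousLinearMap.pi fun i => ContinuousLinearMap.proj (Fin.succ i)

theorem tailL_apply (y : Fin (n + 1) → ℝ) : tailL y = y ∘ Fin.succ := rfl

theorem pd_comp_tail_succ {F : (Fin n → ℝ) → ℝ} {x : Fin (n + 1) → ℝ}
    (hF : DifferentiableAt ℝ F (x ∘ Fin.succ)) (k : Fin n) :
    pd (Fin.succ k) (fun y => F (y ∘ Fin.succ)) x = pd k F (x ∘ Fin.succ) := by
  unfold pd
  have h1 : (fun y : Fin (n+1) → ℝ => F (y ∘ Fin.succ)) = F ∘ (tailL (n := n)) := rfl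
  rw [h1, fderiv_comp x hF (tailL.differentiableAt)]
  rw [tailL.fderiv]
  simp only [ContinuousLinearMap.coe_comp', Function.comp_apply]
  congr 1
  funext i
  simp [tailL, Pi.single_apply, Fin.succ_inj]

theorem pd_comp_tail_zero {F : (Fin n → ℝ) → ℝ} {x : Fin (n + 1) → ℝ}
    (hF : DifferentiableAt ℝ F (x ∘ Fin.succ)) :
    pd 0 (fun y => F (y ∘ Fin.succ)) x = 0 := by
  unfold pd
  have h1 : (fun y : Fin (n+1) → ℝ => F (y ∘ Fin.succ)) = F ∘ (tailL (n := n)) := rfl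
  rw [h1, fderiv_comp x hF (tailL.differentiableAt)]
  rw [tailL.fderiv]
  simp only [ContinuousLinearMap.coe_comp', Function.comp_apply]
  have : (tailL (n := n)) (Pi.single 0 1) = 0 := by
    funext i
    simp [tailL, Pi.single_apply, Fin.succ_ne_zero]
  rw [this]
  simp

theorem pd_comp0 {φ : ℝ → ℝ} {x : Fin (n + 1) → ℝ} (hφ : DifferentiableAt ℝ φ (x 0)) :
    pd 0 (fun y => φ (y 0)) x = deriv φ (x 0) := by
  unfold pd
  have h1 : (fun y : Fin (n+1) → ℝ => φ (y 0)) = φ ∘ (ContinuousLinearMap.proj (R := ℝ) (φ := fun _ : Fin (n+1) => ℝ) 0) := rfl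
  rw [h1, fderiv_comp x hφ (ContinuousLinearMap.differentiableAt _), ContinuousLinearMap.fderiv]
  simp [← toSpanSingleton_deriv]

theorem pd_comp0_succ {φ : ℝ → ℝ} {x : Fin (n + 1) → ℝ} (hφ : DifferentiableAt ℝ φ (x 0)) (k : Fin n) :
    pd (Fin.succ k) (fun y => φ (y 0)) x = 0 := by
  unfold pd
  have h1 : (fun y : Fin (n+1) → ℝ => φ (y 0)) = φ ∘ (ContinuousLinearMap.proj (R := ℝ) (φ := fun _ : Fin (n+1) => ℝ) 0) := rfl
  rw [h1, fderiv_comp x hφ (ContinuousLinearMap.differentiableAt _), ContinuousLinearMap.fderiv]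
  simp [Pi.single_apply, (Fin.succ_ne_zero k).symm]

end Aux


namespace Aux2
variable {E : Type*} [NormedAddCommGroup E] [NormedSpace ℝ E]

theorem contDiff_finset_prod {ι : Type*} (s : Finset ι) (f : ι → E → ℝ)
    (hf : ∀ i, ContDiff ℝ (⊤ : ℕ∞) (f i)) : ContDiff ℝ (⊤ : ℕ∞) fun x => ∏ i ∈ s, f i x := by
  classical
  induction s using Finset.induction with
  | empty => simpa using contDiff_const
  | insert _ _ h ih =>
    simp only [Finset.prod_insert h]
    exact (hf _).mul ih

theorem contDiff_det {m : ℕ} (A : E → Matrix (Fin m) (Fin m) ℝ)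
    (hA : ∀ i j, ContDiff ℝ (⊤ : ℕ∞) fun z => (A z) i j) :
    ContDiff ℝ (⊤ : ℕ∞) fun z => (A z).det := by
  simp only [Matrix.det_apply]
  apply ContDiff.sum
  intro σ _
  have := contDiff_finset_prod (E := E) Finset.univ (fun i z => A z (σ i) i) (fun i => hA _ _)
  simpa [Units.smul_def, zsmul_eq_mul] using this.const_smul ((Equiv.Perm.sign σ : ℤ) : ℝ)

theorem contDiff_inv_entry {m : ℕ} (A : E → Matrix (Fin m) (Fin m) ℝ)
    (hA : ∀ i j, ContDiff ℝ (⊤ : ℕ∞) fun z => (A z) i j)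
    (hdet : ∀ z, (A z).det ≠ 0) (i j : Fin m) :
    ContDiff ℝ (⊤ : ℕ∞) fun z => (A z)⁻¹ i j := by
  have h1 : ∀ z, (A z)⁻¹ i j = ((A z).det)⁻¹ * (A z).adjugate i j := by
    intro z
    rw [Matrix.inv_def]
    simp [Ring.inverse_eq_inv']
  simp only [h1]
  apply ContDiff.mul
  · exact (contDiff_det A hA).inv hdet
  · simp only [Matrix.adjugate_apply]
    apply contDiff_det
    intro k l
    by_cases hk : k = j
    · subst hk
      simp only [Matrix.updateRow_self]
      exact contDiff_const
    · simp only [Matrix.updateRow_ne hk]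
      exact hA k l

theorem contDiff_pd {n : ℕ} (i : Fin n) (h : (Fin n → ℝ) → ℝ) (hh : ContDiff ℝ (⊤ : ℕ∞) h) :
    ContDiff ℝ (⊤ : ℕ∞) fun x => pd i h x := by
  unfold pd
  exact (hh.fderiv_right (le_refl _)).clm_apply contDiff_const

end Aux2


open Aux Aux2


namespace ConeAux

variable {d : ℕ}

theorem cone_zz (gp : (Fin (d + 1) → ℝ) → Matrix (Fin (d + 1)) (Fin (d + 1)) ℝ)
    (y : Fin (d + 2) → ℝ) : coneMetric gp y 0 0 = -1 := by
  simp [coneMetric, (Fin.succ_ne_zero _).symm]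

theorem cone_zs (gp : (Fin (d + 1) → ℝ) → Matrix (Fin (d + 1)) (Fin (d + 1)) ℝ)
    (y : Fin (d + 2) → ℝ) (j : Fin (d + 1)) : coneMetric gp y 0 (Fin.succ j) = 0 := by
  simp [coneMetric, (Fin.succ_ne_zero _).symm, Fin.succ_ne_zero]

theorem cone_sz (gp : (Fin (d + 1) → ℝ) → Matrix (Fin (d + 1)) (Fin (d + 1)) ℝ)
    (y : Fin (d + 2) → ℝ) (i : Fin (d + 1)) : coneMetric gp y (Fin.succ i) 0 = 0 := by
  simp [coneMetric, (Fin.succ_ne_zero _).symm, Fin.succ_ne_zero]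

theorem sum_ite_pair {d : ℕ} (i j : Fin (d + 1)) (F : Fin (d+1) → Fin (d+1) → ℝ) :
    (∑ a, ∑ b, if i = a ∧ j = b then F a b else 0) = F i j := by
  rw [Finset.sum_eq_single i]
  · rw [Finset.sum_eq_single j]
    · simp
    · intro b _ hb; simp [Ne.symm hb]
    · simp
  · intro a _ ha
    apply Finset.sum_eq_zero; intro b _
    simp [Ne.symm ha]
  · simp

theorem cone_ss (gp : (Fin (d + 1) → ℝ) → Matrix (Fin (d + 1)) (Fin (d + 1)) ℝ)
    (y : Fin (d + 2) → ℝ) (i j : Fin (d + 1)) :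
    coneMetric gp y (Fin.succ i) (Fin.succ j) = (y 0) ^ 2 * gp (y ∘ Fin.succ) i j := by
  simp only [coneMetric, Matrix.of_apply, Fin.succ_inj, (Fin.succ_ne_zero i).symm,
    Fin.succ_ne_zero, false_and, and_false, if_false,
    sum_ite_pair (F := fun a b => gp (y ∘ Fin.succ) a b), false_or, or_false]
  ring


def coneInv {d : ℕ} (gp : (Fin (d + 1) → ℝ) → Matrix (Fin (d + 1)) (Fin (d + 1)) ℝ) :
    MetricField (d + 2) := fun y =>
  Matrix.of fun I J =>
    (if I = 0 ∧ J = 0 then -1 else 0)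
      + ((y 0) ^ 2)⁻¹ * ∑ i, ∑ j,
          (if I = Fin.succ i ∧ J = Fin.succ j then (gp (y ∘ Fin.succ))⁻¹ i j else 0)

variable {gp : (Fin (d + 1) → ℝ) → Matrix (Fin (d + 1)) (Fin (d + 1)) ℝ}

theorem coneInv_zz (y : Fin (d + 2) → ℝ) : coneInv gp y 0 0 = -1 := by
  simp [coneInv, (Fin.succ_ne_zero _).symm]

theorem coneInv_zs (y : Fin (d + 2) → ℝ) (j : Fin (d + 1)) : coneInv gp y 0 (Fin.succ j) = 0 := by
  simp [coneInv, (Fin.succ_ne_zero _).symm, Fin.succ_ne_zero]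

theorem coneInv_sz (y : Fin (d + 2) → ℝ) (i : Fin (d + 1)) : coneInv gp y (Fin.succ i) 0 = 0 := by
  simp [coneInv, (Fin.succ_ne_zero _).symm, Fin.succ_ne_zero]

theorem coneInv_ss (y : Fin (d + 2) → ℝ) (i j : Fin (d + 1)) :
    coneInv gp y (Fin.succ i) (Fin.succ j) = ((y 0) ^ 2)⁻¹ * (gp (y ∘ Fin.succ))⁻¹ i j := by
  simp only [coneInv, Matrix.of_apply, Fin.succ_inj, (Fin.succ_ne_zero i).symm,
    Fin.succ_ne_zero, false_and, and_false, if_false,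
    sum_ite_pair (F := fun a b => (gp (y ∘ Fin.succ))⁻¹ a b), false_or, or_false]
  ring

theorem cone_inv_eq (hgpos : ∀ x, (gp x).PosDef) (y : Fin (d + 2) → ℝ) (hy : y 0 ≠ 0) :
    (coneMetric gp y)⁻¹ = coneInv gp y := by
  have hdet : IsUnit (gp (y ∘ Fin.succ)).det :=
    isUnit_iff_ne_zero.mpr (hgpos (y ∘ Fin.succ)).det_pos.ne'
  apply Matrix.inv_eq_right_inv
  ext I J
  rw [Matrix.mul_apply, Fin.sum_univ_succ]
  induction I using Fin.cases with
  | zero =>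
    induction J using Fin.cases with
    | zero =>
      simp [cone_zz, cone_zs, coneInv_zz, coneInv_sz, Matrix.one_apply]
    | succ j =>
      simp [cone_zz, cone_zs, coneInv_zs, coneInv_ss, Matrix.one_apply, (Fin.succ_ne_zero j).symm]
  | succ i =>
    induction J using Fin.cases with
    | zero =>
      simp [cone_sz, cone_ss, coneInv_zz, coneInv_sz, Matrix.one_apply, Fin.succ_ne_zero]
    | succ j =>
      have : ∀ k, coneMetric gp y (Fin.succ i) (Fin.succ k) * coneInv gp y (Fin.succ k) (Fin.succ j)
          = gp (y ∘ Fin.succ) i k * (gp (y ∘ Fin.succ))⁻¹ k j := by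
        intro k
        rw [cone_ss, coneInv_ss]
        have hy2 : (y 0)^2 ≠ 0 := pow_ne_zero _ hy
        field_simp
      simp only [cone_sz, coneInv_zs, zero_mul, mul_zero, zero_add, this]
      rw [← Matrix.mul_apply, Matrix.mul_nonsing_inv _ hdet, Matrix.one_apply, Matrix.one_apply]
      simp [Fin.succ_inj]


theorem diff_comp_tail {F : (Fin (d + 1) → ℝ) → ℝ} {x : Fin (d + 2) → ℝ}
    (hF : DifferentiableAt ℝ F (x ∘ Fin.succ)) :
    DifferentiableAt ℝ (fun y => F (y ∘ Fin.succ)) x :=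
  DifferentiableAt.comp x hF (tailL.differentiableAt)

theorem diff_y0 {x : Fin (d + 2) → ℝ} :
    DifferentiableAt ℝ (fun y : Fin (d + 2) → ℝ => y 0) x :=
  (ContinuousLinearMap.proj (R := ℝ) (φ := fun _ : Fin (d + 2) => ℝ) 0).differentiableAt

theorem contDiff_CLow (hgs : ∀ i j, ContDiff ℝ (⊤ : ℕ∞) fun x => gp x i j) (i j k : Fin (d + 1)) :
    ContDiff ℝ (⊤ : ℕ∞) fun z => ChristoffelLow gp i j k z := by
  unfold ChristoffelLow
  exact (((contDiff_pd _ _ (hgs j k)).add (contDiff_pd _ _ (hgs i k))).sub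
    (contDiff_pd _ _ (hgs i j))).div_const 2

theorem contDiff_C (hgs : ∀ i j, ContDiff ℝ (⊤ : ℕ∞) fun x => gp x i j)
    (hgpos : ∀ x, (gp x).PosDef) (l i j : Fin (d + 1)) :
    ContDiff ℝ (⊤ : ℕ∞) fun z => Christoffel gp l i j z := by
  unfold Christoffel
  apply ContDiff.sum
  intro k _
  exact (contDiff_inv_entry gp hgs (fun z => (hgpos z).det_pos.ne') l k).mul
    (contDiff_CLow hgs i j k)

theorem pdm_ss_0 (hgs : ∀ i j, ContDiff ℝ (⊤ : ℕ∞) fun x => gp x i j) (i j : Fin (d + 1))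
    (x : Fin (d + 2) → ℝ) :
    pd 0 (fun y => coneMetric gp y (Fin.succ i) (Fin.succ j)) x
      = 2 * x 0 * gp (x ∘ Fin.succ) i j := by
  have e : (fun y => coneMetric gp y (Fin.succ i) (Fin.succ j))
      = fun y => (y 0) ^ 2 * gp (y ∘ Fin.succ) i j := funext fun y => cone_ss gp y i j
  rw [e, pd_mul (a := fun y => (y 0 : ℝ) ^ 2) (b := fun y => gp (y ∘ Fin.succ) i j)
    (diff_y0.pow 2) (diff_comp_tail (F := fun z => gp z i j) ((hgs i j).differentiable (by simp) _)),
    pd_comp0 (φ := fun t : ℝ => t ^ 2) (by fun_prop),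
    pd_comp_tail_zero (F := fun z => gp z i j) ((hgs i j).differentiable (by simp) _)]
  simp [mul_comm]

theorem pdm_ss_s (hgs : ∀ i j, ContDiff ℝ (⊤ : ℕ∞) fun x => gp x i j) (i j k : Fin (d + 1))
    (x : Fin (d + 2) → ℝ) :
    pd (Fin.succ k) (fun y => coneMetric gp y (Fin.succ i) (Fin.succ j)) x
      = (x 0) ^ 2 * pd k (fun z => gp z i j) (x ∘ Fin.succ) := by
  have e : (fun y => coneMetric gp y (Fin.succ i) (Fin.succ j))
      = fun y => (y 0) ^ 2 * gp (y ∘ Fin.succ) i j := funext fun y => cone_ss gp y i j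
  rw [e, pd_mul (a := fun y => (y 0 : ℝ) ^ 2) (b := fun y => gp (y ∘ Fin.succ) i j)
    (diff_y0.pow 2) (diff_comp_tail (F := fun z => gp z i j) ((hgs i j).differentiable (by simp) _)),
    pd_comp0_succ (φ := fun t : ℝ => t ^ 2) (by fun_prop),
    pd_comp_tail_succ (F := fun z => gp z i j) ((hgs i j).differentiable (by simp) _)]
  ring

theorem pdm_zz (I : Fin (d + 2)) (x : Fin (d + 2) → ℝ) :
    pd I (fun y => coneMetric gp y 0 0) x = 0 := by
  have e : (fun y => coneMetric gp y 0 0) = fun _ : Fin (d + 2) → ℝ => (-1 : ℝ) :=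
    funext fun y => cone_zz gp y
  rw [e, pd_const]

theorem pdm_zs (I : Fin (d + 2)) (j : Fin (d + 1)) (x : Fin (d + 2) → ℝ) :
    pd I (fun y => coneMetric gp y 0 (Fin.succ j)) x = 0 := by
  have e : (fun y => coneMetric gp y 0 (Fin.succ j)) = fun _ : Fin (d + 2) → ℝ => (0 : ℝ) :=
    funext fun y => cone_zs gp y j
  rw [e, pd_const]

theorem pdm_sz (I : Fin (d + 2)) (i : Fin (d + 1)) (x : Fin (d + 2) → ℝ) :
    pd I (fun y => coneMetric gp y (Fin.succ i) 0) x = 0 := by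
  have e : (fun y => coneMetric gp y (Fin.succ i) 0) = fun _ : Fin (d + 2) → ℝ => (0 : ℝ) :=
    funext fun y => cone_sz gp y i
  rw [e, pd_const]


section Gamma
variable (hgs : ∀ i j, ContDiff ℝ (⊤ : ℕ∞) fun x => gp x i j)
include hgs

theorem CL_sss (i j k : Fin (d + 1)) (x : Fin (d + 2) → ℝ) :
    ChristoffelLow (coneMetric gp) (Fin.succ i) (Fin.succ j) (Fin.succ k) x
      = (x 0) ^ 2 * ChristoffelLow gp i j k (x ∘ Fin.succ) := by
  unfold ChristoffelLow
  rw [pdm_ss_s hgs j k i, pdm_ss_s hgs i k j, pdm_ss_s hgs i j k]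
  ring

theorem CL_ssz (i j : Fin (d + 1)) (x : Fin (d + 2) → ℝ) :
    ChristoffelLow (coneMetric gp) (Fin.succ i) (Fin.succ j) 0 x
      = -(x 0) * gp (x ∘ Fin.succ) i j := by
  unfold ChristoffelLow
  rw [pdm_sz, pdm_sz, pdm_ss_0 hgs i j]
  ring

theorem CL_zss (j k : Fin (d + 1)) (x : Fin (d + 2) → ℝ) :
    ChristoffelLow (coneMetric gp) 0 (Fin.succ j) (Fin.succ k) x
      = x 0 * gp (x ∘ Fin.succ) j k := by
  unfold ChristoffelLow
  rw [pdm_ss_0 hgs j k, pdm_zs, pdm_zs]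
  ring

theorem CL_szs (i k : Fin (d + 1)) (x : Fin (d + 2) → ℝ) :
    ChristoffelLow (coneMetric gp) (Fin.succ i) 0 (Fin.succ k) x
      = x 0 * gp (x ∘ Fin.succ) i k := by
  unfold ChristoffelLow
  rw [pdm_ss_0 hgs i k, pdm_zs, pdm_sz]
  ring

omit hgs in
theorem CL_zzK (K : Fin (d + 2)) (x : Fin (d + 2) → ℝ) :
    ChristoffelLow (coneMetric gp) 0 0 K x = 0 := by
  unfold ChristoffelLow
  induction K using Fin.cases with
  | zero => simp only [pdm_zz, pdm_zs, pdm_sz]; ring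
  | succ k => simp only [pdm_zz, pdm_zs, pdm_sz]; ring

omit hgs in
theorem CL_zsz (j : Fin (d + 1)) (x : Fin (d + 2) → ℝ) :
    ChristoffelLow (coneMetric gp) 0 (Fin.succ j) 0 x = 0 := by
  unfold ChristoffelLow
  simp only [pdm_zz, pdm_zs, pdm_sz]
  ring

omit hgs in
theorem CL_szz (i : Fin (d + 1)) (x : Fin (d + 2) → ℝ) :
    ChristoffelLow (coneMetric gp) (Fin.succ i) 0 0 x = 0 := by
  unfold ChristoffelLow
  simp only [pdm_zz, pdm_zs, pdm_sz]
  ring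

end Gamma

section Gamma2
variable (hgs : ∀ i j, ContDiff ℝ (⊤ : ℕ∞) fun x => gp x i j) (hgpos : ∀ x, (gp x).PosDef)
  (hgsym : ∀ x, (gp x).IsSymm)
include hgs hgpos hgsym

theorem G_zss (y : Fin (d + 2) → ℝ) (hy : y 0 ≠ 0) (i j : Fin (d + 1)) :
    Christoffel (coneMetric gp) 0 (Fin.succ i) (Fin.succ j) y
      = y 0 * gp (y ∘ Fin.succ) i j := by
  unfold Christoffel
  rw [cone_inv_eq hgpos y hy, Fin.sum_univ_succ]
  simp only [coneInv_zz, coneInv_zs, zero_mul, Finset.sum_const_zero, add_zero,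
    CL_ssz hgs i j]
  ring

theorem G_zzs (y : Fin (d + 2) → ℝ) (hy : y 0 ≠ 0) (j : Fin (d + 1)) :
    Christoffel (coneMetric gp) 0 0 (Fin.succ j) y = 0 := by
  unfold Christoffel
  rw [cone_inv_eq hgpos y hy, Fin.sum_univ_succ]
  simp [coneInv_zz, coneInv_zs, CL_zsz]

theorem G_zsz (y : Fin (d + 2) → ℝ) (hy : y 0 ≠ 0) (i : Fin (d + 1)) :
    Christoffel (coneMetric gp) 0 (Fin.succ i) 0 y = 0 := by
  unfold Christoffel
  rw [cone_inv_eq hgpos y hy, Fin.sum_univ_succ]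
  simp [coneInv_zz, coneInv_zs, CL_szz]

theorem G_zzz (y : Fin (d + 2) → ℝ) (hy : y 0 ≠ 0) :
    Christoffel (coneMetric gp) 0 0 0 y = 0 := by
  unfold Christoffel
  rw [cone_inv_eq hgpos y hy, Fin.sum_univ_succ]
  simp [coneInv_zz, coneInv_zs, CL_zzK]

theorem G_sss (y : Fin (d + 2) → ℝ) (hy : y 0 ≠ 0) (l i j : Fin (d + 1)) :
    Christoffel (coneMetric gp) (Fin.succ l) (Fin.succ i) (Fin.succ j) y
      = Christoffel gp l i j (y ∘ Fin.succ) := by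
  unfold Christoffel
  rw [cone_inv_eq hgpos y hy, Fin.sum_univ_succ]
  simp only [coneInv_sz, coneInv_ss, zero_mul, zero_add]
  have : ∀ k, ((y 0) ^ 2)⁻¹ * (gp (y ∘ Fin.succ))⁻¹ l k
        * ChristoffelLow (coneMetric gp) (Fin.succ i) (Fin.succ j) (Fin.succ k) y
      = (gp (y ∘ Fin.succ))⁻¹ l k * ChristoffelLow gp i j k (y ∘ Fin.succ) := by
    intro k
    rw [CL_sss hgs i j k]
    have hy2 : (y 0) ^ 2 ≠ 0 := pow_ne_zero _ hy
    field_simp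
  simp only [this]

theorem G_szs (y : Fin (d + 2) → ℝ) (hy : y 0 ≠ 0) (l j : Fin (d + 1)) :
    Christoffel (coneMetric gp) (Fin.succ l) 0 (Fin.succ j) y
      = (y 0)⁻¹ * (if l = j then 1 else 0) := by
  unfold Christoffel
  rw [cone_inv_eq hgpos y hy, Fin.sum_univ_succ]
  simp only [coneInv_sz, coneInv_ss, zero_mul, zero_add]
  have : ∀ k, ((y 0) ^ 2)⁻¹ * (gp (y ∘ Fin.succ))⁻¹ l k
        * ChristoffelLow (coneMetric gp) 0 (Fin.succ j) (Fin.succ k) y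
      = (y 0)⁻¹ * ((gp (y ∘ Fin.succ))⁻¹ l k * gp (y ∘ Fin.succ) k j) := by
    intro k
    rw [CL_zss hgs j k]
    have hjk : gp (y ∘ Fin.succ) j k = gp (y ∘ Fin.succ) k j := by
      have := (hgsym (y ∘ Fin.succ)); rw [Matrix.IsSymm] at this
      conv_lhs => rw [← this]
      rfl
    rw [hjk]
    have hy2 : (y 0) ^ 2 ≠ 0 := pow_ne_zero _ hy
    field_simp
  rw [Finset.sum_congr rfl (fun k _ => this k), ← Finset.mul_sum]
  congr 1
  have hdet : IsUnit (gp (y ∘ Fin.succ)).det :=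
    isUnit_iff_ne_zero.mpr (hgpos (y ∘ Fin.succ)).det_pos.ne'
  have := Matrix.nonsing_inv_mul _ hdet
  calc ∑ k, (gp (y ∘ Fin.succ))⁻¹ l k * gp (y ∘ Fin.succ) k j
      = ((gp (y ∘ Fin.succ))⁻¹ * gp (y ∘ Fin.succ)) l j := by rw [Matrix.mul_apply]
    _ = (1 : Matrix (Fin (d+1)) (Fin (d+1)) ℝ) l j := by rw [this]
    _ = if l = j then 1 else 0 := by rw [Matrix.one_apply]

theorem G_ssz (y : Fin (d + 2) → ℝ) (hy : y 0 ≠ 0) (l i : Fin (d + 1)) :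
    Christoffel (coneMetric gp) (Fin.succ l) (Fin.succ i) 0 y
      = (y 0)⁻¹ * (if l = i then 1 else 0) := by
  have h1 : ∀ K x, ChristoffelLow (coneMetric gp) (Fin.succ i) 0 K x
      = ChristoffelLow (coneMetric gp) 0 (Fin.succ i) K x := by
    intro K x; unfold ChristoffelLow; simp only [pdm_sz, pdm_zs]; ring
  unfold Christoffel
  rw [Finset.sum_congr rfl (fun K _ => by rw [h1 K y])]
  exact G_szs hgs hgpos hgsym y hy l i

theorem G_szz (y : Fin (d + 2) → ℝ) (hy : y 0 ≠ 0) (l : Fin (d + 1)) :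
    Christoffel (coneMetric gp) (Fin.succ l) 0 0 y = 0 := by
  unfold Christoffel
  rw [cone_inv_eq hgpos y hy, Fin.sum_univ_succ]
  simp only [coneInv_sz, coneInv_ss, zero_mul, zero_add]
  apply Finset.sum_eq_zero
  intro k _
  rw [CL_zzK]
  ring

end Gamma2


theorem pd_y0_zero {x : Fin (d + 2) → ℝ} : pd 0 (fun y : Fin (d + 2) → ℝ => y 0) x = 1 := by
  have e : (fun y : Fin (d + 2) → ℝ => y 0) = fun y => (fun t : ℝ => t) (y 0) := rfl
  rw [e, pd_comp0 (φ := fun t : ℝ => t) differentiableAt_id]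
  simp

theorem pd_y0_succ {x : Fin (d + 2) → ℝ} (k : Fin (d + 1)) :
    pd (Fin.succ k) (fun y : Fin (d + 2) → ℝ => y 0) x = 0 := by
  have e : (fun y : Fin (d + 2) → ℝ => y 0) = fun y => (fun t : ℝ => t) (y 0) := rfl
  rw [e, pd_comp0_succ (φ := fun t : ℝ => t) differentiableAt_id k]

section Ricci
variable (hgs : ∀ i j, ContDiff ℝ (⊤ : ℕ∞) fun x => gp x i j) (hgpos : ∀ x, (gp x).PosDef)
  (hgsym : ∀ x, (gp x).IsSymm) {x : Fin (d + 2) → ℝ} (hx : 0 < x 0)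
include hgs hgpos hgsym hx

omit hgs hgpos hgsym in
theorem evNe : ∀ᶠ y in nhds x, y 0 ≠ 0 := by
  have hc : Continuous (fun y : Fin (d + 2) → ℝ => y 0) := continuous_apply 0
  exact hc.continuousAt.eventually_ne hx.ne'

theorem R1 (i j : Fin (d + 1)) :
    pd 0 (fun y => Christoffel (coneMetric gp) 0 (Fin.succ i) (Fin.succ j) y) x
      = gp (x ∘ Fin.succ) i j := by
  have he : (fun y => Christoffel (coneMetric gp) 0 (Fin.succ i) (Fin.succ j) y)
      =ᶠ[nhds x] fun y => y 0 * gp (y ∘ Fin.succ) i j :=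
    (evNe hx).mono fun y hy => G_zss hgs hgpos hgsym y hy i j
  rw [pd_congr_nhds he,
    pd_mul (a := fun y : Fin (d + 2) → ℝ => y 0) (b := fun y => gp (y ∘ Fin.succ) i j)
      diff_y0 (diff_comp_tail (F := fun z => gp z i j) ((hgs i j).differentiable (by simp) _)),
    pd_y0_zero, pd_comp_tail_zero (F := fun z => gp z i j) ((hgs i j).differentiable (by simp) _)]
  ring

theorem R2 (k a b c : Fin (d + 1)) :
    pd (Fin.succ k)
      (fun y => Christoffel (coneMetric gp) (Fin.succ a) (Fin.succ b) (Fin.succ c) y) x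
      = pd k (fun z => Christoffel gp a b c z) (x ∘ Fin.succ) := by
  have he : (fun y => Christoffel (coneMetric gp) (Fin.succ a) (Fin.succ b) (Fin.succ c) y)
      =ᶠ[nhds x] fun y => Christoffel gp a b c (y ∘ Fin.succ) :=
    (evNe hx).mono fun y hy => G_sss hgs hgpos hgsym y hy a b c
  rw [pd_congr_nhds he,
    pd_comp_tail_succ (F := fun z => Christoffel gp a b c z)
      ((contDiff_C hgs hgpos a b c).differentiable (by simp) _) k]

theorem R3 (i j : Fin (d + 1)) :
    pd (Fin.succ i) (fun y => Christoffel (coneMetric gp) 0 0 (Fin.succ j) y) x = 0 := by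
  have he : (fun y => Christoffel (coneMetric gp) 0 0 (Fin.succ j) y)
      =ᶠ[nhds x] fun _ => (0 : ℝ) :=
    (evNe hx).mono fun y hy => G_zzs hgs hgpos hgsym y hy j
  rw [pd_congr_nhds he, pd_const]

theorem T1 (i j : Fin (d + 1)) :
    (∑ L, pd L (fun y => Christoffel (coneMetric gp) L (Fin.succ i) (Fin.succ j) y) x)
      = gp (x ∘ Fin.succ) i j
        + ∑ l, pd l (fun z => Christoffel gp l i j z) (x ∘ Fin.succ) := by
  rw [Fin.sum_univ_succ, R1 hgs hgpos hgsym hx i j]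
  congr 1
  exact Finset.sum_congr rfl fun l _ => R2 hgs hgpos hgsym hx l l i j

theorem T2 (i j : Fin (d + 1)) :
    (∑ L, pd (Fin.succ i) (fun y => Christoffel (coneMetric gp) L L (Fin.succ j) y) x)
      = ∑ l, pd i (fun z => Christoffel gp l l j z) (x ∘ Fin.succ) := by
  rw [Fin.sum_univ_succ, R3 hgs hgpos hgsym hx i j, zero_add]
  exact Finset.sum_congr rfl fun l _ => R2 hgs hgpos hgsym hx i l l j

omit hgs hgpos hgsym hx in
theorem cancel_lemma (hne : x 0 ≠ 0) (A B : ℝ) :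
    (x 0 * A) * ((x 0)⁻¹ * B) = A * B := by
  field_simp

omit hgs hgpos hgsym hx in
theorem cancel_lemma' (hne : x 0 ≠ 0) (A B : ℝ) :
    ((x 0)⁻¹ * B) * (x 0 * A) = B * A := by
  field_simp

theorem T3 (i j : Fin (d + 1)) :
    (∑ P, ∑ L, Christoffel (coneMetric gp) P (Fin.succ i) (Fin.succ j) x
        * Christoffel (coneMetric gp) L L P x)
      = ((d : ℝ) + 1) * gp (x ∘ Fin.succ) i j
        + ∑ p, ∑ l, Christoffel gp p i j (x ∘ Fin.succ)
            * Christoffel gp l l p (x ∘ Fin.succ) := by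
  have hne := hx.ne'
  rw [Fin.sum_univ_succ]
  have h1 : (∑ L, Christoffel (coneMetric gp) 0 (Fin.succ i) (Fin.succ j) x
      * Christoffel (coneMetric gp) L L 0 x) = ((d : ℝ) + 1) * gp (x ∘ Fin.succ) i j := by
    rw [Fin.sum_univ_succ, G_zzz hgs hgpos hgsym x hne]
    have e : ∀ l : Fin (d + 1), Christoffel (coneMetric gp) 0 (Fin.succ i) (Fin.succ j) x
        * Christoffel (coneMetric gp) (Fin.succ l) (Fin.succ l) 0 x
        = gp (x ∘ Fin.succ) i j := by
      intro l
      rw [G_zss hgs hgpos hgsym x hne i j, G_ssz hgs hgpos hgsym x hne l l,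
        cancel_lemma hne]
      simp
    rw [Finset.sum_congr rfl fun l _ => e l]
    simp only [mul_zero, zero_add, Finset.sum_const, Finset.card_univ, Fintype.card_fin,
      nsmul_eq_mul]
    push_cast
    ring
  rw [h1]
  congr 1
  apply Finset.sum_congr rfl
  intro p _
  rw [Fin.sum_univ_succ, G_zzs hgs hgpos hgsym x hne p,
    G_sss hgs hgpos hgsym x hne p i j, mul_zero, zero_add]
  apply Finset.sum_congr rfl
  intro l _
  rw [G_sss hgs hgpos hgsym x hne l l p]

theorem T4 (i j : Fin (d + 1)) :
    (∑ P, ∑ L, Christoffel (coneMetric gp) P L (Fin.succ j) x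
        * Christoffel (coneMetric gp) L (Fin.succ i) P x)
      = 2 * gp (x ∘ Fin.succ) i j
        + ∑ p, ∑ l, Christoffel gp p l j (x ∘ Fin.succ)
            * Christoffel gp l i p (x ∘ Fin.succ) := by
  have hne := hx.ne'
  rw [Fin.sum_univ_succ]
  have h1 : (∑ L, Christoffel (coneMetric gp) 0 L (Fin.succ j) x
      * Christoffel (coneMetric gp) L (Fin.succ i) 0 x) = gp (x ∘ Fin.succ) i j := by
    rw [Fin.sum_univ_succ, G_zzs hgs hgpos hgsym x hne j]
    have e : ∀ l : Fin (d + 1), Christoffel (coneMetric gp) 0 (Fin.succ l) (Fin.succ j) x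
        * Christoffel (coneMetric gp) (Fin.succ l) (Fin.succ i) 0 x
        = (if l = i then 1 else 0) * gp (x ∘ Fin.succ) l j := by
      intro l
      rw [G_zss hgs hgpos hgsym x hne l j, G_ssz hgs hgpos hgsym x hne l i,
        cancel_lemma hne]
      ring
    rw [Finset.sum_congr rfl fun l _ => e l]
    simp only [ite_mul, one_mul, zero_mul, Finset.sum_ite_eq', Finset.mem_univ, if_true,
      mul_zero, zero_add]
  rw [h1]
  have h2 : (∑ p : Fin (d + 1), ∑ L, Christoffel (coneMetric gp) (Fin.succ p) L (Fin.succ j) x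
      * Christoffel (coneMetric gp) L (Fin.succ i) (Fin.succ p) x)
      = gp (x ∘ Fin.succ) i j + ∑ p, ∑ l, Christoffel gp p l j (x ∘ Fin.succ)
          * Christoffel gp l i p (x ∘ Fin.succ) := by
    have hp : ∀ p : Fin (d + 1), (∑ L, Christoffel (coneMetric gp) (Fin.succ p) L (Fin.succ j) x
        * Christoffel (coneMetric gp) L (Fin.succ i) (Fin.succ p) x)
        = (if p = j then 1 else 0) * gp (x ∘ Fin.succ) i p
          + ∑ l, Christoffel gp p l j (x ∘ Fin.succ) * Christoffel gp l i p (x ∘ Fin.succ) := by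
      intro p
      rw [Fin.sum_univ_succ, G_szs hgs hgpos hgsym x hne p j,
        G_zss hgs hgpos hgsym x hne i p, cancel_lemma' hne]
      congr 1
      apply Finset.sum_congr rfl
      intro l _
      rw [G_sss hgs hgpos hgsym x hne p l j, G_sss hgs hgpos hgsym x hne l i p]
    rw [Finset.sum_congr rfl fun p _ => hp p, Finset.sum_add_distrib]
    congr 1
    simp only [ite_mul, one_mul, zero_mul, Finset.sum_ite_eq', Finset.mem_univ, if_true]
  rw [h2]
  ring

theorem Ricci_cone (i j : Fin (d + 1)) :
    RicciT (coneMetric gp) (Fin.succ i) (Fin.succ j) x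
      = RicciT gp i j (x ∘ Fin.succ) + (d : ℝ) * gp (x ∘ Fin.succ) i j := by
  unfold RicciT
  rw [T1 hgs hgpos hgsym hx i j, T2 hgs hgpos hgsym hx i j, T3 hgs hgpos hgsym hx i j,
    T4 hgs hgpos hgsym hx i j]
  ring

end Ricci


section Hess
variable {fp : (Fin (d + 1) → ℝ) → ℝ} (hfps : ContDiff ℝ (⊤ : ℕ∞) fp)
  (hgs : ∀ i j, ContDiff ℝ (⊤ : ℕ∞) fun x => gp x i j) (hgpos : ∀ x, (gp x).PosDef)
  (hgsym : ∀ x, (gp x).IsSymm) {x : Fin (d + 2) → ℝ} (hx : 0 < x 0)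
include hfps

theorem pdF_zero (y : Fin (d + 2) → ℝ) : pd 0 (coneF fp) y = fp (y ∘ Fin.succ) := by
  unfold coneF
  rw [pd_mul (a := fun y : Fin (d + 2) → ℝ => y 0) (b := fun y => fp (y ∘ Fin.succ))
      diff_y0 (diff_comp_tail (F := fp) (hfps.differentiable (by simp) _)),
    pd_y0_zero, pd_comp_tail_zero (F := fp) (hfps.differentiable (by simp) _)]
  ring

theorem pdF_succ (k : Fin (d + 1)) (y : Fin (d + 2) → ℝ) :
    pd (Fin.succ k) (coneF fp) y = y 0 * pd k fp (y ∘ Fin.succ) := by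
  unfold coneF
  rw [pd_mul (a := fun y : Fin (d + 2) → ℝ => y 0) (b := fun y => fp (y ∘ Fin.succ))
      diff_y0 (diff_comp_tail (F := fp) (hfps.differentiable (by simp) _)),
    pd_y0_succ, pd_comp_tail_succ (F := fp) (hfps.differentiable (by simp) _)]
  ring

include hgs hgpos hgsym hx

theorem Hess_cone (i j : Fin (d + 1)) :
    HessT (coneMetric gp) (coneF fp) (Fin.succ i) (Fin.succ j) x
      = x 0 * HessT gp fp i j (x ∘ Fin.succ)
        - x 0 * fp (x ∘ Fin.succ) * gp (x ∘ Fin.succ) i j := by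
  have hne := hx.ne'
  unfold HessT
  have e : (fun y => pd (Fin.succ j) (coneF fp) y)
      = fun y : Fin (d + 2) → ℝ => y 0 * pd j fp (y ∘ Fin.succ) :=
    funext fun y => pdF_succ hfps j y
  rw [e, pd_mul (a := fun y : Fin (d + 2) → ℝ => y 0)
      (b := fun y => pd j fp (y ∘ Fin.succ)) diff_y0
      (diff_comp_tail (F := fun z => pd j fp z)
        ((contDiff_pd j fp hfps).differentiable (by simp) _)),
    pd_y0_succ, pd_comp_tail_succ (F := fun z => pd j fp z)
      ((contDiff_pd j fp hfps).differentiable (by simp) _)]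
  rw [Fin.sum_univ_succ, G_zss hgs hgpos hgsym x hne i j, pdF_zero hfps x]
  have e2 : ∀ k : Fin (d + 1),
      Christoffel (coneMetric gp) (Fin.succ k) (Fin.succ i) (Fin.succ j) x
        * pd (Fin.succ k) (coneF fp) x
      = Christoffel gp k i j (x ∘ Fin.succ) * (x 0 * pd k fp (x ∘ Fin.succ)) := by
    intro k
    rw [G_sss hgs hgpos hgsym x hne k i j, pdF_succ hfps k x]
  rw [Finset.sum_congr rfl fun k _ => e2 k]
  have e3 : (∑ k, Christoffel gp k i j (x ∘ Fin.succ) * (x 0 * pd k fp (x ∘ Fin.succ)))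
      = x 0 * ∑ k, Christoffel gp k i j (x ∘ Fin.succ) * pd k fp (x ∘ Fin.succ) := by
    rw [Finset.mul_sum]
    exact Finset.sum_congr rfl fun k _ => by ring
  rw [e3]
  ring

end Hess

end ConeAux

/-- On the cone `(ℝ₊ × M, g̃ = s² g₊ - ds²)` with `f̃ = s f₊`, the
Bakry–Émery Ricci tensor of `g̃` in directions tangent to `M` satisfies
`Ric_φ^m(g̃) = Ric_φ^m(g₊) + (d+m) g₊`. -/
theorem cone_bakry_emery_ricci {d : ℕ}
    (gp : (Fin (d + 1) → ℝ) → Matrix (Fin (d + 1)) (Fin (d + 1)) ℝ)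
    (fp : (Fin (d + 1) → ℝ) → ℝ) (m μ : ℝ)
    (hfp : ∀ x, 0 < fp x) (hfps : ContDiff ℝ (⊤ : ℕ∞) fp)
    (hgs : ∀ i j, ContDiff ℝ (⊤ : ℕ∞) fun x => gp x i j)
    (hgsym : ∀ x, (gp x).IsSymm) (hgpos : ∀ x, (gp x).PosDef) :
    ∀ x : Fin (d + 2) → ℝ, 0 < x 0 →
      ∀ i j : Fin (d + 1),
        BERic (coneMetric gp) m (coneF fp) (Fin.succ i) (Fin.succ j) x
          = BERic gp m fp i j (x ∘ Fin.succ) + ((d : ℝ) + m) * gp (x ∘ Fin.succ) i j := by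
  intro x hx i j
  unfold BERic
  rw [ConeAux.Ricci_cone hgs hgpos hgsym hx i j,
    ConeAux.Hess_cone hfps hgs hgpos hgsym hx i j]
  have hF : fp (x ∘ Fin.succ) ≠ 0 := (hfp _).ne'
  have hs : x 0 ≠ 0 := hx.ne'
  have hc : coneF fp x = x 0 * fp (x ∘ Fin.succ) := rfl
  rw [hc]
  field_simp
  ring
end
end

section
/- Let g̃ = a dt² + 2 b_i dxⁱ dt + 2t dρ dt + t² g_ρ be a metric on ℝ₊ × M × (-ε,ε) (coordinates t, x, ρ; t-direction indexed 0, ρ-direction indexed ∞). Then the lines ρ ↦ (t, x, ρ) are geodesics of g̃ and g̃ restricts to 𝐠 + 2t dρ dt at ρ=0 if and only if g̃_{∞∞} = 0, g̃_{∞i} = 0, and g̃_{0∞} = t identically. -/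
open Matrix BigOperators

noncomputable section

section Aux

open Filter Set

lemma pd_congr_nhds {n : ℕ} {h k : (Fin n → ℝ) → ℝ} {x : Fin n → ℝ}
    (H : h =ᶠ[nhds x] k) (i : Fin n) : pd i h x = pd i k x := by
  unfold pd; rw [H.fderiv_eq]

lemma pd_zero_of_eqOn {n : ℕ} {h : (Fin n → ℝ) → ℝ} {U : Set (Fin n → ℝ)} {c : ℝ}
    (hU : IsOpen U) {x : Fin n → ℝ} (hx : x ∈ U) (hc : ∀ y ∈ U, h y = c) (i : Fin n) :
    pd i h x = 0 := by
  have : pd i h x = pd i (fun _ => c) x :=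
    pd_congr_nhds (Filter.eventuallyEq_of_mem (hU.mem_nhds hx) hc) i
  rw [this]
  unfold pd
  simp

lemma pd_proj_of_eqOn {n : ℕ} {h : (Fin n → ℝ) → ℝ} {U : Set (Fin n → ℝ)} {j : Fin n}
    (hU : IsOpen U) {x : Fin n → ℝ} (hx : x ∈ U) (hc : ∀ y ∈ U, h y = y j) {i : Fin n}
    (hij : j ≠ i) : pd i h x = 0 := by
  have : pd i h x = pd i (fun y => y j) x :=
    pd_congr_nhds (Filter.eventuallyEq_of_mem (hU.mem_nhds hx) hc) i
  rw [this]
  unfold pd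
  rw [show (fun y : Fin n → ℝ => y j)
      = ⇑(ContinuousLinearMap.proj (R := ℝ) (φ := fun _ : Fin n => ℝ) j) from rfl,
    (ContinuousLinearMap.proj (R := ℝ) (φ := fun _ : Fin n => ℝ) j).fderiv]
  exact Pi.single_eq_of_ne hij 1

lemma hasDerivAt_update' {n : ℕ} (x : Fin n → ℝ) (i : Fin n) (s : ℝ) :
    HasDerivAt (fun t : ℝ => Function.update x i t) (Pi.single i 1) s := by
  have heq : (fun t : ℝ => Function.update x i t)
      = fun t : ℝ => (x - Pi.single i (x i)) + t • (Pi.single i 1 : Fin n → ℝ) := by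
    funext t j
    by_cases hji : j = i
    · subst hji; simp
    · simp [Function.update_of_ne hji, Pi.single_eq_of_ne hji]
  rw [heq]
  simpa using ((hasDerivAt_id s).smul_const (Pi.single i 1 : Fin n → ℝ)).const_add
    (x - Pi.single i (x i))

lemma hasDerivAt_along {n : ℕ} {h : (Fin n → ℝ) → ℝ} (hh : Differentiable ℝ h)
    (x : Fin n → ℝ) (i : Fin n) (s : ℝ) :
    HasDerivAt (fun t : ℝ => h (Function.update x i t))
      (pd i h (Function.update x i s)) s :=
  (hh (Function.update x i s)).hasFDerivAt.comp_hasDerivAt s (hasDerivAt_update' x i s)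

lemma const_of_deriv_zero_interval {f : ℝ → ℝ} {ε ρ : ℝ}
    (hd : ∀ s : ℝ, |s| < ε → HasDerivAt f 0 s) (hρ : |ρ| < ε) (hε : 0 < ε) :
    f ρ = f 0 := by
  have hs : Convex ℝ (Ioo (-ε) ε) := convex_Ioo _ _
  have hmem : ∀ s : ℝ, |s| < ε → s ∈ Ioo (-ε) ε := fun s hls => by
    rw [mem_Ioo]; constructor <;> [exact neg_lt_of_abs_lt hls; exact lt_of_abs_lt hls]
  have h0 : (0 : ℝ) ∈ Ioo (-ε) ε := hmem 0 (by simpa using hε)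
  have hρ' : ρ ∈ Ioo (-ε) ε := hmem ρ hρ
  have := hs.norm_image_sub_le_of_norm_hasDerivWithin_le (C := 0) (f := f)
    (f' := fun _ => 0)
    (fun y hy => (hd y (abs_lt.2 ⟨hy.1, hy.2⟩)).hasDerivWithinAt)
    (fun y _ => by simp) h0 hρ'
  simp only [sub_zero, mul_comm] at this
  have h2 : f ρ - f 0 = 0 := by
    have := le_antisymm (by simpa using this) (norm_nonneg (f ρ - f 0))
    simpa using this
  linarith

lemma fin_trichotomy {d : ℕ} (I : Fin (d + 2)) :
    I = 0 ∨ I = Fin.last (d + 1) ∨ ∃ i : Fin d, I = emb i := by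
  rcases I with ⟨v, hv⟩
  rcases Nat.eq_zero_or_pos v with h0 | h1
  · left; exact Fin.ext h0
  rcases eq_or_lt_of_le (Nat.le_of_lt_succ hv) with he | hl
  · right; left; exact Fin.ext he
  · right; right
    refine ⟨⟨v - 1, by omega⟩, Fin.ext ?_⟩
    simp [emb]
    omega

end Aux

/-- For a metric `g̃` on `ℝ₊ × M × (-ε,ε)` (with `t` indexed by `0` and `ρ` by
`Fin.last (d+1)`), the `ρ`-lines are geodesics and `g̃` restricts to `𝐠 + 2t dρ dt` at `ρ = 0`
if and only if `g̃_{∞∞} = 0`, `g̃_{∞i} = 0` and `g̃_{0∞} = t` identically. -/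
theorem normal_form_characterization {d : ℕ} (ε : ℝ) (hε : 0 < ε)
    (G : MetricField (d + 2))
    (hgs : ∀ I J, ContDiff ℝ (⊤ : ℕ∞) fun x => G x I J)
    (hgsym : ∀ x, (G x).IsSymm) :
    ((∀ x : Fin (d + 2) → ℝ, 0 < x 0 → |x (Fin.last (d + 1))| < ε →
        ∀ I : Fin (d + 2), ChristoffelLow G (Fin.last (d + 1)) (Fin.last (d + 1)) I x = 0)
      ∧ (∀ x : Fin (d + 2) → ℝ, 0 < x 0 → x (Fin.last (d + 1)) = 0 →
          G x (Fin.last (d + 1)) (Fin.last (d + 1)) = 0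
            ∧ (∀ i : Fin d, G x (Fin.last (d + 1)) (emb i) = 0)
            ∧ G x 0 (Fin.last (d + 1)) = x 0))
    ↔ (∀ x : Fin (d + 2) → ℝ, 0 < x 0 → |x (Fin.last (d + 1))| < ε →
        G x (Fin.last (d + 1)) (Fin.last (d + 1)) = 0
          ∧ (∀ i : Fin d, G x (Fin.last (d + 1)) (emb i) = 0)
          ∧ G x 0 (Fin.last (d + 1)) = x 0) := by
  classical
  set inf : Fin (d + 2) := Fin.last (d + 1) with hinfdef
  have hinf0 : inf ≠ 0 := by simp [hinfdef, Fin.ext_iff]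
  set U : Set (Fin (d + 2) → ℝ) := {y | 0 < y 0 ∧ |y inf| < ε} with hUdef
  have hUopen : IsOpen U := by
    have h1 : IsOpen {y : Fin (d + 2) → ℝ | 0 < y 0} :=
      isOpen_lt continuous_const (continuous_apply 0)
    have h2 : IsOpen {y : Fin (d + 2) → ℝ | |y inf| < ε} :=
      isOpen_lt (continuous_apply inf).abs continuous_const
    exact h1.inter h2
  have hdiff : ∀ I J : Fin (d + 2), Differentiable ℝ fun y => G y I J :=
    fun I J => (hgs I J).differentiable (by simp)
  constructor
  · rintro ⟨hΓ, hinit⟩ x hx0 hxε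
    have hxU : x ∈ U := ⟨hx0, hxε⟩
    -- constancy along ρ-lines
    have line : ∀ (I : Fin (d + 2)) (y : Fin (d + 2) → ℝ), 0 < y 0 → |y inf| < ε →
        (∀ z ∈ U, pd inf (fun w => G w inf I) z = 0) →
        G y inf I = G (Function.update y inf 0) inf I := by
      intro I y hy0 hyε hpd
      have hdd : Differentiable ℝ fun w => G w inf I := hdiff inf I
      have key : ∀ s : ℝ, |s| < ε →
          HasDerivAt (fun t : ℝ => G (Function.update y inf t) inf I) 0 s := by
        intro s hs
        have hmem : Function.update y inf s ∈ U := by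
          refine ⟨?_, ?_⟩
          · show 0 < Function.update y inf s 0
            rwa [Function.update_of_ne (Ne.symm hinf0)]
          · show |Function.update y inf s inf| < ε
            rwa [Function.update_self]
        have hda := hasDerivAt_along hdd y inf s
        rwa [hpd _ hmem] at hda
      have hcon := const_of_deriv_zero_interval key hyε hε
      simpa [Function.update_eq_self] using hcon
    -- Step A : G_{∞∞} vanishes on U
    have stepA : ∀ y ∈ U, G y inf inf = 0 := by
      intro y hy
      have hpd : ∀ z ∈ U, pd inf (fun w => G w inf inf) z = 0 := by
        intro z hz
        have hc := hΓ z hz.1 hz.2 inf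
        unfold ChristoffelLow at hc
        linarith
      have h1 := line inf y hy.1 hy.2 hpd
      have h2 := hinit (Function.update y inf 0)
        (by rw [Function.update_of_ne (Ne.symm hinf0)]; exact hy.1) (Function.update_self _ _ _)
      rw [h1]; exact h2.1
    -- Step B : for every I, ∂_∞ G_{∞I} vanishes on U
    have stepB : ∀ I : Fin (d + 2), ∀ z ∈ U, pd inf (fun w => G w inf I) z = 0 := by
      intro I z hz
      have hc := hΓ z hz.1 hz.2 I
      unfold ChristoffelLow at hc
      have hk : pd I (fun w => G w inf inf) z = 0 :=
        pd_zero_of_eqOn hUopen hz stepA I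
      linarith
    have hupd0 : ∀ y : Fin (d + 2) → ℝ, y ∈ U → 0 < Function.update y inf 0 0 :=
      fun y hy => by rw [Function.update_of_ne (Ne.symm hinf0)]; exact hy.1
    refine ⟨stepA x hxU, ?_, ?_⟩
    · intro i
      have h1 := line (emb i) x hx0 hxε (stepB (emb i))
      have h2 := hinit (Function.update x inf 0) (hupd0 x hxU) (Function.update_self _ _ _)
      rw [h1]; exact h2.2.1 i
    · have hsym1 : G x 0 inf = G x inf 0 := (hgsym x).apply inf 0
      have h1 := line 0 x hx0 hxε (stepB 0)
      have h2 := hinit (Function.update x inf 0) (hupd0 x hxU) (Function.update_self _ _ _)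
      have hsym2 : G (Function.update x inf 0) inf 0
          = G (Function.update x inf 0) 0 inf :=
        ((hgsym (Function.update x inf 0)).apply inf 0).symm
      rw [hsym1, h1, hsym2, h2.2.2, Function.update_of_ne (Ne.symm hinf0)]
  · intro hcond
    have hGii : ∀ y ∈ U, G y inf inf = 0 := fun y hy => (hcond y hy.1 hy.2).1
    constructor
    · intro x hx0 hxε I
      have hxU : x ∈ U := ⟨hx0, hxε⟩
      have hk : pd I (fun w => G w inf inf) x = 0 :=
        pd_zero_of_eqOn hUopen hxU hGii I
      unfold ChristoffelLow
      rcases fin_trichotomy I with h0 | hinfI | ⟨i, hi⟩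
      · subst h0
        have hp : pd inf (fun w => G w inf 0) x = 0 := by
          refine pd_proj_of_eqOn hUopen hxU (j := 0) ?_ (Ne.symm hinf0)
          intro y hy
          exact ((hgsym y).apply inf 0).symm.trans (hcond y hy.1 hy.2).2.2
        rw [hp, hk]; ring
      · subst hinfI
        have hp : pd inf (fun w => G w inf inf) x = 0 :=
          pd_zero_of_eqOn hUopen hxU hGii inf
        rw [hp]; ring
      · subst hi
        have hp : pd inf (fun w => G w inf (emb i)) x = 0 :=
          pd_zero_of_eqOn hUopen hxU (fun y hy => (hcond y hy.1 hy.2).2.1 i) inf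
        rw [hp, hk]; ring
    · intro x hx0 hxz
      exact hcond x hx0 (by rw [hxz]; simpa using hε)
end
end

section
/- Let g̃ be the metric 2ρ dt² + 2t dρ dt + t² g_ρ on ℝ₊ × M × (-ε,ε), where g_ρ is a smooth family of Riemannian metrics on M. Let T = t∂_t be the infinitesimal generator of the dilations δ_s(t,x,ρ) = (st,x,ρ). Then g̃(T,T) = 2ρt², the 1-form g̃(2T,·) equals d(g̃(T,T)), and ∇̃T = Id, i.e., ∇̃_X T = X for every vector field X; in particular every dilation orbit s ↦ δ_s p is a geodesic of g̃. -/
open Matrix BigOperators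

noncomputable section

section AuxSMP

variable {d : ℕ}

lemma emb_val (i : Fin d) : (emb i : Fin (d+2)).val = i.val + 1 := rfl

@[simp] lemma emb_ne_zero (i : Fin d) : emb i ≠ (0 : Fin (d+2)) := by
  intro h; have := congrArg Fin.val h; simp [emb_val] at this

@[simp] lemma zero_ne_emb (i : Fin d) : (0 : Fin (d+2)) ≠ emb i := (emb_ne_zero i).symm

@[simp] lemma emb_ne_last (i : Fin d) : emb i ≠ Fin.last (d+1) := by
  intro h; have := congrArg Fin.val h
  simp [emb_val, Fin.val_last] at this
  omega

@[simp] lemma last_ne_emb (i : Fin d) : Fin.last (d+1) ≠ emb i := (emb_ne_last i).symm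

@[simp] lemma last_ne_zero'' : (Fin.last (d+1) : Fin (d+2)) ≠ 0 := by
  intro h; have := congrArg Fin.val h; simp [Fin.val_last] at this

@[simp] lemma zero_ne_last'' : (0 : Fin (d+2)) ≠ Fin.last (d+1) := last_ne_zero''.symm

@[simp] lemma emb_inj {i j : Fin d} : (emb i : Fin (d+2)) = emb j ↔ i = j := by
  constructor
  · intro h; have := congrArg Fin.val h; simp [emb_val] at this; exact Fin.ext this
  · rintro rfl; rfl

lemma fin_cases3 (I : Fin (d+2)) : I = 0 ∨ I = Fin.last (d+1) ∨ ∃ i : Fin d, I = emb i := by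
  rcases I with ⟨v, hv⟩
  rcases Nat.eq_zero_or_pos v with h0 | h1
  · left; exact Fin.ext h0
  · rcases Nat.lt_or_ge v (d+1) with h2 | h2
    · right; right
      refine ⟨⟨v - 1, by omega⟩, Fin.ext ?_⟩
      simp [emb_val]; omega
    · right; left; exact Fin.ext (by simp [Fin.val_last]; omega)

lemma sum_split (f : Fin (d+2) → ℝ) :
    ∑ K, f K = f 0 + (∑ i : Fin d, f (emb i)) + f (Fin.last (d+1)) := by
  rw [Fin.sum_univ_succ, Fin.sum_univ_castSucc]
  have h1 : ∀ i : Fin d, (Fin.castSucc i).succ = emb i := by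
    intro i; exact Fin.ext rfl
  have h2 : (Fin.last d).succ = Fin.last (d+1) := Fin.succ_last d
  simp only [h1, h2]; ring
variable {d : ℕ}

variable (gf : ℝ → (Fin d → ℝ) → Matrix (Fin d) (Fin d) ℝ) (y : Fin (d+2) → ℝ)

lemma amb_00 : ambMetric gf y 0 0 = 2 * y (Fin.last (d+1)) := by
  simp [ambMetric]

lemma amb_0last : ambMetric gf y 0 (Fin.last (d+1)) = y 0 := by
  simp [ambMetric]

lemma amb_last0 : ambMetric gf y (Fin.last (d+1)) 0 = y 0 := by
  simp [ambMetric]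

lemma amb_lastlast : ambMetric gf y (Fin.last (d+1)) (Fin.last (d+1)) = 0 := by
  simp [ambMetric]

lemma amb_0emb (j : Fin d) : ambMetric gf y 0 (emb j) = 0 := by
  simp [ambMetric]

lemma amb_emb0 (i : Fin d) : ambMetric gf y (emb i) 0 = 0 := by
  simp [ambMetric]

lemma amb_lastemb (j : Fin d) : ambMetric gf y (Fin.last (d+1)) (emb j) = 0 := by
  simp [ambMetric]

lemma amb_emblast (i : Fin d) : ambMetric gf y (emb i) (Fin.last (d+1)) = 0 := by
  simp [ambMetric]

lemma amb_embemb (i j : Fin d) :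
    ambMetric gf y (emb i) (emb j)
      = (y 0)^2 * gf (y (Fin.last (d+1))) (mcoord y) i j := by
  simp [ambMetric, ite_and, Finset.sum_ite_eq]

def ambInv (gf : ℝ → (Fin d → ℝ) → Matrix (Fin d) (Fin d) ℝ) :
    MetricField (d + 2) := fun x =>
  Matrix.of fun I J =>
    (if (I = 0 ∧ J = Fin.last (d + 1)) ∨ (I = Fin.last (d + 1) ∧ J = 0) then (x 0)⁻¹ else 0)
      + (if I = Fin.last (d + 1) ∧ J = Fin.last (d + 1)
          then -2 * x (Fin.last (d + 1)) / (x 0) ^ 2 else 0)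
      + ((x 0) ^ 2)⁻¹ * ∑ i, ∑ j,
          (if I = emb i ∧ J = emb j
            then (gf (x (Fin.last (d + 1))) (mcoord x))⁻¹ i j else 0)

lemma inv_00 : ambInv gf y 0 0 = 0 := by simp [ambInv]
lemma inv_0last : ambInv gf y 0 (Fin.last (d+1)) = (y 0)⁻¹ := by simp [ambInv]
lemma inv_last0 : ambInv gf y (Fin.last (d+1)) 0 = (y 0)⁻¹ := by simp [ambInv]
lemma inv_lastlast : ambInv gf y (Fin.last (d+1)) (Fin.last (d+1))
    = -2 * y (Fin.last (d+1)) / (y 0)^2 := by simp [ambInv]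
lemma inv_0emb (j : Fin d) : ambInv gf y 0 (emb j) = 0 := by simp [ambInv]
lemma inv_emb0 (i : Fin d) : ambInv gf y (emb i) 0 = 0 := by simp [ambInv]
lemma inv_lastemb (j : Fin d) : ambInv gf y (Fin.last (d+1)) (emb j) = 0 := by simp [ambInv]
lemma inv_emblast (i : Fin d) : ambInv gf y (emb i) (Fin.last (d+1)) = 0 := by simp [ambInv]
lemma inv_embemb (i j : Fin d) :
    ambInv gf y (emb i) (emb j)
      = ((y 0)^2)⁻¹ * (gf (y (Fin.last (d+1))) (mcoord y))⁻¹ i j := by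
  simp [ambInv, ite_and, Finset.sum_ite_eq]

lemma amb_inv_eq (hgpos : ∀ ρ z, (gf ρ z).PosDef) (hy : y 0 ≠ 0) :
    (ambMetric gf y)⁻¹ = ambInv gf y := by
  apply Matrix.inv_eq_right_inv
  ext I J
  have hdet : IsUnit (gf (y (Fin.last (d+1))) (mcoord y)).det :=
    isUnit_iff_ne_zero.mpr (hgpos _ _).det_pos.ne'
  have hMI := Matrix.mul_nonsing_inv _ hdet
  rw [Matrix.mul_apply, sum_split]
  rcases fin_cases3 I with rfl | rfl | ⟨i, rfl⟩ <;>
    rcases fin_cases3 J with rfl | rfl | ⟨j, rfl⟩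
  · simp [amb_00, amb_0last, amb_0emb, inv_00, inv_last0, inv_emb0, Matrix.one_apply]
    field_simp
  · simp [amb_00, amb_0last, amb_0emb, inv_0last, inv_lastlast, inv_emblast, Matrix.one_apply]
    field_simp; ring
  · simp [amb_00, amb_0last, amb_0emb, inv_0emb, inv_lastemb, inv_embemb, Matrix.one_apply]
  · simp [amb_last0, amb_lastlast, amb_lastemb, inv_00, inv_last0, inv_emb0, Matrix.one_apply]
  · simp [amb_last0, amb_lastlast, amb_lastemb, inv_0last, inv_lastlast, inv_emblast,
      Matrix.one_apply]
    field_simp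
  · simp [amb_last0, amb_lastlast, amb_lastemb, inv_0emb, inv_lastemb, inv_embemb,
      Matrix.one_apply]
  · simp [amb_emb0, amb_emblast, amb_embemb, inv_00, inv_last0, inv_emb0, Matrix.one_apply]
  · simp [amb_emb0, amb_emblast, amb_embemb, inv_0last, inv_lastlast, inv_emblast,
      Matrix.one_apply]
  · simp only [amb_emb0, amb_emblast, amb_embemb, inv_0emb, inv_lastemb, inv_embemb,
      Matrix.one_apply, zero_mul, mul_zero, add_zero, zero_add]
    have : ∀ k : Fin d, (y 0)^2 * gf (y (Fin.last (d+1))) (mcoord y) i k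
        * (((y 0)^2)⁻¹ * (gf (y (Fin.last (d+1))) (mcoord y))⁻¹ k j)
        = gf (y (Fin.last (d+1))) (mcoord y) i k
          * (gf (y (Fin.last (d+1))) (mcoord y))⁻¹ k j := by
      intro k
      field_simp
    rw [Finset.sum_congr rfl fun k _ => this k]
    have := congrFun (congrFun hMI i) j
    rw [Matrix.mul_apply] at this
    rw [this, Matrix.one_apply]
    simp [emb_inj]

variable {I J K : Fin (d+2)} {x : Fin (d+2) → ℝ}

lemma pd_proj (I J : Fin (d+2)) (x : Fin (d+2) → ℝ) :
    pd I (fun y => y J) x = if J = I then 1 else 0 := by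
  have : (fun y : Fin (d+2) → ℝ => y J) = (ContinuousLinearMap.proj (R := ℝ)
      (φ := fun _ : Fin (d+2) => ℝ) J) := rfl
  rw [pd, this, ContinuousLinearMap.fderiv]
  simp [Pi.single_apply]

lemma pd_const (I : Fin (d+2)) (x : Fin (d+2) → ℝ) (c : ℝ) :
    pd I (fun _ => c) x = 0 := by
  simp [pd, fderiv_const]

lemma pd_cmul (I : Fin (d+2)) (x : Fin (d+2) → ℝ) (c : ℝ) (f : (Fin (d+2) → ℝ) → ℝ)
    (hf : DifferentiableAt ℝ f x) :
    pd I (fun y => c * f y) x = c * pd I f x := by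
  simp [pd, fderiv_const_mul hf c]

lemma diff_proj (J : Fin (d+2)) (x : Fin (d+2) → ℝ) :
    DifferentiableAt ℝ (fun y : Fin (d+2) → ℝ => y J) x :=
  (ContinuousLinearMap.proj (R := ℝ) (φ := fun _ : Fin (d+2) => ℝ) J).differentiableAt

/-- The linear map `y ↦ (y ρ, y|_M)`. -/
def Lm (d : ℕ) : ((Fin (d+2) → ℝ)) →L[ℝ] ℝ × (Fin d → ℝ) :=
  (ContinuousLinearMap.proj (R := ℝ) (φ := fun _ : Fin (d+2) => ℝ) (Fin.last (d+1))).prod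
    (ContinuousLinearMap.pi fun j => ContinuousLinearMap.proj (R := ℝ)
      (φ := fun _ : Fin (d+2) => ℝ) (emb j))

lemma Lm_single0 : Lm d (Pi.single (0 : Fin (d+2)) (1:ℝ)) = 0 := by
  have h1 : (Pi.single (0 : Fin (d+2)) (1:ℝ) : Fin (d+2) → ℝ) (Fin.last (d+1)) = 0 := by
    simp [Pi.single_apply]
  have h2 : ∀ j : Fin d, (Pi.single (0 : Fin (d+2)) (1:ℝ) : Fin (d+2) → ℝ) (emb j) = 0 := by
    intro j; simp [Pi.single_apply]
  simp [Lm, ContinuousLinearMap.prod_apply, Prod.ext_iff, h1]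
  funext j
  simpa using h2 j

lemma diff_G (hgs : ∀ i j, ContDiff ℝ (⊤ : ℕ∞) fun p : ℝ × (Fin d → ℝ) => gf p.1 p.2 i j)
    (i j : Fin d) (x : Fin (d+2) → ℝ) :
    DifferentiableAt ℝ (fun y : Fin (d+2) → ℝ =>
      gf (y (Fin.last (d+1))) (mcoord y) i j) x := by
  have : (fun y : Fin (d+2) → ℝ => gf (y (Fin.last (d+1))) (mcoord y) i j)
      = (fun p : ℝ × (Fin d → ℝ) => gf p.1 p.2 i j) ∘ (Lm d) := rfl
  rw [this]
  exact DifferentiableAt.comp x (((hgs i j).differentiable (by simp)).differentiableAt)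
    (Lm d).differentiableAt

lemma pd0_G (hgs : ∀ i j, ContDiff ℝ (⊤ : ℕ∞) fun p : ℝ × (Fin d → ℝ) => gf p.1 p.2 i j)
    (i j : Fin d) (x : Fin (d+2) → ℝ) :
    pd 0 (fun y => gf (y (Fin.last (d+1))) (mcoord y) i j) x = 0 := by
  have heq : (fun y : Fin (d+2) → ℝ => gf (y (Fin.last (d+1))) (mcoord y) i j)
      = (fun p : ℝ × (Fin d → ℝ) => gf p.1 p.2 i j) ∘ (Lm d) := rfl
  rw [pd, heq, fderiv_comp x (((hgs i j).differentiable (by simp)).differentiableAt)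
    (Lm d).differentiableAt]
  simp [ (Lm d).fderiv, Lm_single0]

lemma pd_mul (I : Fin (d+2)) (x : Fin (d+2) → ℝ) (f g : (Fin (d+2) → ℝ) → ℝ)
    (hf : DifferentiableAt ℝ f x) (hg : DifferentiableAt ℝ g x) :
    pd I (fun y => f y * g y) x = pd I f x * g x + f x * pd I g x := by
  simp [pd, fderiv_fun_mul hf hg]; ring

lemma diff_sq0 (x : Fin (d+2) → ℝ) :
    DifferentiableAt ℝ (fun y : Fin (d+2) → ℝ => (y 0)^2) x := (diff_proj 0 x).pow 2

lemma pd_sq0 (I : Fin (d+2)) (x : Fin (d+2) → ℝ) :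
    pd I (fun y => (y 0)^2) x = 2 * x 0 * (if (0:Fin (d+2)) = I then 1 else 0) := by
  have : (fun y : Fin (d+2) → ℝ => (y 0)^2) = fun y => y 0 * y 0 := by
    funext y; ring
  rw [this, pd_mul I x _ _ (diff_proj 0 x) (diff_proj 0 x), pd_proj]
  ring

lemma pd0_mid (hgs : ∀ i j, ContDiff ℝ (⊤ : ℕ∞) fun p : ℝ × (Fin d → ℝ) => gf p.1 p.2 i j)
    (i j : Fin d) (x : Fin (d+2) → ℝ) :
    pd 0 (fun y => ambMetric gf y (emb i) (emb j)) x
      = 2 * x 0 * gf (x (Fin.last (d+1))) (mcoord x) i j := by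
  have heq : (fun y => ambMetric gf y (emb i) (emb j))
      = fun y => (y 0)^2 * gf (y (Fin.last (d+1))) (mcoord y) i j := by
    funext y; exact amb_embemb gf y i j
  rw [heq, pd_mul 0 x _ _ (diff_sq0 x) (diff_G gf hgs i j x), pd_sq0, pd0_G gf hgs i j x]
  simp

-- pd of the entry functions
lemma pdg00 (I : Fin (d+2)) (x : Fin (d+2) → ℝ) :
    pd I (fun y => ambMetric gf y 0 0) x = if Fin.last (d+1) = I then 2 else 0 := by
  have e : (fun y => ambMetric gf y 0 0) = fun y : Fin (d+2) → ℝ => 2 * y (Fin.last (d+1)) :=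
    funext fun y => amb_00 gf y
  rw [e, pd_cmul _ _ _ _ (diff_proj _ _), pd_proj]
  split <;> norm_num

lemma pdg0last (I : Fin (d+2)) (x : Fin (d+2) → ℝ) :
    pd I (fun y => ambMetric gf y 0 (Fin.last (d+1))) x
      = if (0 : Fin (d+2)) = I then 1 else 0 := by
  have e : (fun y => ambMetric gf y 0 (Fin.last (d+1))) = fun y : Fin (d+2) → ℝ => y 0 :=
    funext fun y => amb_0last gf y
  rw [e, pd_proj]

lemma pdglast0 (I : Fin (d+2)) (x : Fin (d+2) → ℝ) :
    pd I (fun y => ambMetric gf y (Fin.last (d+1)) 0) x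
      = if (0 : Fin (d+2)) = I then 1 else 0 := by
  have e : (fun y => ambMetric gf y (Fin.last (d+1)) 0) = fun y : Fin (d+2) → ℝ => y 0 :=
    funext fun y => amb_last0 gf y
  rw [e, pd_proj]

lemma pdglastlast (I : Fin (d+2)) (x : Fin (d+2) → ℝ) :
    pd I (fun y => ambMetric gf y (Fin.last (d+1)) (Fin.last (d+1))) x = 0 := by
  have e : (fun y => ambMetric gf y (Fin.last (d+1)) (Fin.last (d+1)))
      = fun _ : Fin (d+2) → ℝ => (0:ℝ) := funext fun y => amb_lastlast gf y
  rw [e, pd_const]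

lemma pdg0emb (I : Fin (d+2)) (j : Fin d) (x : Fin (d+2) → ℝ) :
    pd I (fun y => ambMetric gf y 0 (emb j)) x = 0 := by
  have e : (fun y => ambMetric gf y 0 (emb j)) = fun _ : Fin (d+2) → ℝ => (0:ℝ) :=
    funext fun y => amb_0emb gf y j
  rw [e, pd_const]

lemma pdgemb0 (I : Fin (d+2)) (i : Fin d) (x : Fin (d+2) → ℝ) :
    pd I (fun y => ambMetric gf y (emb i) 0) x = 0 := by
  have e : (fun y => ambMetric gf y (emb i) 0) = fun _ : Fin (d+2) → ℝ => (0:ℝ) :=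
    funext fun y => amb_emb0 gf y i
  rw [e, pd_const]

lemma pdglastemb (I : Fin (d+2)) (j : Fin d) (x : Fin (d+2) → ℝ) :
    pd I (fun y => ambMetric gf y (Fin.last (d+1)) (emb j)) x = 0 := by
  have e : (fun y => ambMetric gf y (Fin.last (d+1)) (emb j)) = fun _ : Fin (d+2) → ℝ => (0:ℝ) :=
    funext fun y => amb_lastemb gf y j
  rw [e, pd_const]

lemma pdgemblast (I : Fin (d+2)) (i : Fin d) (x : Fin (d+2) → ℝ) :
    pd I (fun y => ambMetric gf y (emb i) (Fin.last (d+1))) x = 0 := by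
  have e : (fun y => ambMetric gf y (emb i) (Fin.last (d+1))) = fun _ : Fin (d+2) → ℝ => (0:ℝ) :=
    funext fun y => amb_emblast gf y i
  rw [e, pd_const]

-- Christoffel symbols of the first kind with middle index 0
lemma gammaLow_00 (K : Fin (d+2)) (x : Fin (d+2) → ℝ) :
    ChristoffelLow (ambMetric gf) 0 0 K x = 0 := by
  rcases fin_cases3 K with rfl | rfl | ⟨k, rfl⟩
  · simp [ChristoffelLow, pdg00]
  · simp [ChristoffelLow, pdg0last, pdg00]
    norm_num
  · simp [ChristoffelLow, pdg0emb, pdg00]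

lemma gammaLow_last0 (K : Fin (d+2)) (x : Fin (d+2) → ℝ) :
    ChristoffelLow (ambMetric gf) (Fin.last (d+1)) 0 K x = if K = 0 then 1 else 0 := by
  rcases fin_cases3 K with rfl | rfl | ⟨k, rfl⟩
  · simp [ChristoffelLow, pdg00, pdglast0]
  · simp [ChristoffelLow, pdg0last, pdglastlast, pdglast0]
  · simp [ChristoffelLow, pdg0emb, pdglastemb, pdglast0]

lemma gammaLow_emb0 (hgs : ∀ i j, ContDiff ℝ (⊤ : ℕ∞) fun p : ℝ × (Fin d → ℝ) => gf p.1 p.2 i j)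
    (i : Fin d) (K : Fin (d+2)) (x : Fin (d+2) → ℝ) :
    ChristoffelLow (ambMetric gf) (emb i) 0 K x
      = if ∃ k, K = emb k then
          x 0 * (∑ k, (if K = emb k then gf (x (Fin.last (d+1))) (mcoord x) i k else 0))
        else 0 := by
  rcases fin_cases3 K with rfl | rfl | ⟨k, rfl⟩
  · simp [ChristoffelLow, pdg00, pdgemb0]
  · simp [ChristoffelLow, pdg0last, pdgemblast, pdgemb0]
  · have : ∃ k' : Fin d, emb k = emb k' := ⟨k, rfl⟩
    simp only [ChristoffelLow, pdg0emb, pdgemb0, pd0_mid gf hgs, this, if_true]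
    simp [Finset.sum_ite_eq]
    ring

lemma christoffel_J00 (J : Fin (d+2)) (x : Fin (d+2) → ℝ) :
    Christoffel (ambMetric gf) J 0 0 x = 0 := by
  simp [Christoffel, gammaLow_00]

lemma christoffel_last0 (hgpos : ∀ ρ z, (gf ρ z).PosDef) (J : Fin (d+2))
    (x : Fin (d+2) → ℝ) (hx : x 0 ≠ 0) :
    Christoffel (ambMetric gf) J (Fin.last (d+1)) 0 x
      = if J = Fin.last (d+1) then (x 0)⁻¹ else 0 := by
  rw [Christoffel, amb_inv_eq gf x hgpos hx]
  simp only [gammaLow_last0, mul_ite, mul_one, mul_zero, Finset.sum_ite_eq']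
  simp only [Finset.mem_univ, if_true]
  rcases fin_cases3 J with rfl | rfl | ⟨j, rfl⟩
  · simp [inv_00]
  · simp [inv_last0]
  · simp [inv_emb0]

lemma christoffel_emb0 (hgs : ∀ i j, ContDiff ℝ (⊤ : ℕ∞) fun p : ℝ × (Fin d → ℝ) => gf p.1 p.2 i j)
    (hgpos : ∀ ρ z, (gf ρ z).PosDef) (hgsym : ∀ ρ z, (gf ρ z).IsSymm)
    (i : Fin d) (J : Fin (d+2)) (x : Fin (d+2) → ℝ) (hx : x 0 ≠ 0) :
    Christoffel (ambMetric gf) J (emb i) 0 x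
      = if J = emb i then (x 0)⁻¹ else 0 := by
  set ρ := x (Fin.last (d+1))
  set A := gf ρ (mcoord x) with hA
  rw [Christoffel, amb_inv_eq gf x hgpos hx, sum_split]
  have h0 : ChristoffelLow (ambMetric gf) (emb i) 0 0 x = 0 := by
    rw [gammaLow_emb0 gf hgs]; simp
  have hlast : ChristoffelLow (ambMetric gf) (emb i) 0 (Fin.last (d+1)) x = 0 := by
    rw [gammaLow_emb0 gf hgs]; simp
  have hmid : ∀ k : Fin d, ChristoffelLow (ambMetric gf) (emb i) 0 (emb k) x
      = x 0 * A i k := by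
    intro k
    rw [gammaLow_emb0 gf hgs]
    have : ∃ k' : Fin d, emb k = emb k' := ⟨k, rfl⟩
    simp [this, Finset.sum_ite_eq]
    exact Or.inl rfl
  rw [h0, hlast]
  simp only [mul_zero, add_zero, zero_add]
  rw [Finset.sum_congr rfl fun k _ => by rw [hmid k]]
  rcases fin_cases3 J with rfl | rfl | ⟨j, rfl⟩
  · simp [inv_0emb]
  · simp [inv_lastemb]
  · simp only [inv_embemb]
    have hdet : IsUnit A.det := isUnit_iff_ne_zero.mpr (hgpos _ _).det_pos.ne'
    have hIM := Matrix.nonsing_inv_mul A hdet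
    have hsum : ∑ k : Fin d, ((x 0)^2)⁻¹ * A⁻¹ j k * (x 0 * A i k)
        = (x 0)⁻¹ * ∑ k, A⁻¹ j k * A k i := by
      rw [Finset.mul_sum]
      refine Finset.sum_congr rfl fun k _ => ?_
      have hAsymm : A k i = A i k := (hgsym ρ (mcoord x)).apply i k
      rw [hAsymm]
      field_simp
    rw [hsum]
    have := congrFun (congrFun hIM j) i
    rw [Matrix.mul_apply] at this
    rw [this, Matrix.one_apply]
    simp [emb_inj]

lemma pd_h (I : Fin (d+2)) (x : Fin (d+2) → ℝ) :
    pd I (fun y : Fin (d+2) → ℝ => 2 * y (Fin.last (d+1)) * (y 0)^2) x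
      = 2 * (if Fin.last (d+1) = I then 1 else 0) * (x 0)^2
        + 2 * x (Fin.last (d+1)) * (2 * x 0 * (if (0:Fin (d+2)) = I then 1 else 0)) := by
  rw [pd_mul I x _ _ ((diff_proj _ x).const_mul 2) (diff_sq0 x),
    pd_cmul _ _ _ _ (diff_proj _ x), pd_proj, pd_sq0]


end AuxSMP

/-- For `g̃ = 2ρ dt² + 2t dρ dt + t² g_ρ` and `T = t ∂_t`, one has
`g̃(T,T) = 2ρt²`, `g̃(2T,·) = d(g̃(T,T))`, `∇̃T = Id`, and every dilation orbit
`s ↦ δ_s p` is a geodesic. -/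
theorem straight_metric_properties {d : ℕ}
    (gf : ℝ → (Fin d → ℝ) → Matrix (Fin d) (Fin d) ℝ)
    (hgs : ∀ i j, ContDiff ℝ (⊤ : ℕ∞) fun p : ℝ × (Fin d → ℝ) => gf p.1 p.2 i j)
    (hgsym : ∀ ρ y, (gf ρ y).IsSymm) (hgpos : ∀ ρ y, (gf ρ y).PosDef)
    (T : (Fin (d + 2) → ℝ) → (Fin (d + 2) → ℝ))
    (hT : T = fun x => Pi.single (0 : Fin (d + 2)) (x 0)) :
    ∀ x : Fin (d + 2) → ℝ, 0 < x 0 →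
      -- g̃(T,T) = 2ρt²
      ((∑ I, ∑ J, ambMetric gf x I J * T x I * T x J)
          = 2 * x (Fin.last (d + 1)) * (x 0) ^ 2)
      -- g̃(2T,·) = d(g̃(T,T))
      ∧ (∀ I : Fin (d + 2),
          2 * ∑ K, ambMetric gf x I K * T x K
            = pd I (fun y => ∑ J, ∑ K, ambMetric gf y J K * T y J * T y K) x)
      -- ∇̃T = Id, i.e. ∇̃_{∂_I} T = ∂_I
      ∧ (∀ I J : Fin (d + 2),
          pd I (fun y => T y J) x + (∑ K, Christoffel (ambMetric gf) J I K x * T x K)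
            = if I = J then 1 else 0)
      -- every dilation orbit s ↦ δ_s p is a geodesic
      ∧ (∀ s : ℝ, 0 < s → ∀ J : Fin (d + 2),
          deriv (fun u => deriv (fun v =>
              (fun w I => if I = (0 : Fin (d + 2)) then w * x 0 else x I) v J) u) s
            + ∑ I, ∑ K,
                Christoffel (ambMetric gf) J I K
                    (fun I => if I = (0 : Fin (d + 2)) then s * x 0 else x I)
                  * deriv (fun v =>
                      (fun w I => if I = (0 : Fin (d + 2)) then w * x 0 else x I) v I) s
                  * deriv (fun v =>
                      (fun w I => if I = (0 : Fin (d + 2)) then w * x 0 else x I) v K) s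
            = 0) := by
  subst hT
  intro x hx
  have hx0 : x 0 ≠ 0 := hx.ne'
  -- the scalar function g̃(T,T) in general
  have hsum1 : ∀ y : Fin (d+2) → ℝ,
      (∑ I, ∑ J, ambMetric gf y I J * (Pi.single (0 : Fin (d+2)) (y 0) : Fin (d+2) → ℝ) I
        * (Pi.single (0 : Fin (d+2)) (y 0) : Fin (d+2) → ℝ) J) = 2 * y (Fin.last (d+1)) * (y 0)^2 := by
    intro y
    simp only [Pi.single_apply, mul_ite, ite_mul, mul_zero, zero_mul, mul_one,
      Finset.sum_ite_eq', Finset.mem_univ, if_true]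
    rw [amb_00]
    ring
  refine ⟨hsum1 x, ?_, ?_, ?_⟩
  · -- claim 2
    intro I
    have hfun : (fun y => ∑ J, ∑ K, ambMetric gf y J K * (Pi.single (0 : Fin (d+2)) (y 0) : Fin (d+2) → ℝ) J
        * (Pi.single (0 : Fin (d+2)) (y 0) : Fin (d+2) → ℝ) K)
        = fun y : Fin (d+2) → ℝ => 2 * y (Fin.last (d+1)) * (y 0)^2 := funext hsum1
    rw [hfun, pd_h]
    have hcol : (∑ K, ambMetric gf x I K * (Pi.single (0 : Fin (d+2)) (x 0) : Fin (d+2) → ℝ) K)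
        = ambMetric gf x I 0 * x 0 := by
      simp [Pi.single_apply, mul_ite, Finset.sum_ite_eq']
    rw [hcol]
    rcases fin_cases3 I with rfl | rfl | ⟨i, rfl⟩
    · rw [amb_00]; simp; ring
    · rw [amb_last0]; simp; ring
    · rw [amb_emb0]; simp
  · -- claim 3
    intro I J
    have hcol : (∑ K, Christoffel (ambMetric gf) J I K x * (Pi.single (0 : Fin (d+2)) (x 0) : Fin (d+2) → ℝ) K)
        = Christoffel (ambMetric gf) J I 0 x * x 0 := by
      simp [Pi.single_apply, mul_ite, Finset.sum_ite_eq']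
    rw [hcol]
    have hpdT : pd I (fun y => (Pi.single (0 : Fin (d+2)) (y 0) : Fin (d+2) → ℝ) J) x
        = if J = 0 then (if (0:Fin (d+2)) = I then 1 else 0) else 0 := by
      by_cases hJ : J = 0
      · subst hJ
        have : (fun y : Fin (d+2) → ℝ => (Pi.single (0 : Fin (d+2)) (y 0) : Fin (d+2) → ℝ) 0)
            = fun y => y 0 := by
          funext y; simp
        rw [this, pd_proj]
        simp
      · have : (fun y : Fin (d+2) → ℝ => (Pi.single (0 : Fin (d+2)) (y 0) : Fin (d+2) → ℝ) J)
            = fun _ => (0:ℝ) := by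
          funext y; simp [Pi.single_apply, hJ]
        rw [this, pd_const]
        simp [hJ]
    rw [hpdT]
    rcases fin_cases3 I with rfl | rfl | ⟨i, rfl⟩
    · rw [christoffel_J00]
      by_cases hJ : J = 0 <;> simp [hJ, eq_comm]
    · rw [christoffel_last0 gf hgpos J x hx0]
      by_cases hJ : J = Fin.last (d+1)
      · subst hJ; simp [inv_mul_cancel₀ hx0]
      · simp [hJ, (Ne.symm hJ : Fin.last (d+1) ≠ J)]
    · rw [christoffel_emb0 gf hgs hgpos hgsym i J x hx0]
      by_cases hJ : J = emb i
      · subst hJ; simp [inv_mul_cancel₀ hx0]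
      · simp [hJ, (Ne.symm hJ : emb i ≠ J)]
  · -- claim 4
    intro s hs J
    have hder : ∀ (Jj : Fin (d+2)) (u : ℝ),
        deriv (fun v => (fun w I => if I = (0 : Fin (d+2)) then w * x 0 else x I) v Jj) u
          = if Jj = 0 then x 0 else 0 := by
      intro Jj u
      by_cases h : Jj = 0
      · simp only [h, if_true]
        rw [deriv_mul_const differentiableAt_fun_id]
        simp
      · simp [h]
    have houter : (fun u => deriv (fun v =>
        (fun w I => if I = (0 : Fin (d + 2)) then w * x 0 else x I) v J) u)
        = fun _ : ℝ => (if J = 0 then x 0 else 0) := funext fun u => hder J u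
    rw [houter, deriv_const]
    have hcol : ∀ I : Fin (d+2), (∑ K, Christoffel (ambMetric gf) J I K
          (fun I => if I = (0 : Fin (d + 2)) then s * x 0 else x I)
        * deriv (fun v => (fun w I => if I = (0 : Fin (d + 2)) then w * x 0 else x I) v I) s
        * deriv (fun v => (fun w I => if I = (0 : Fin (d + 2)) then w * x 0 else x I) v K) s)
        = Christoffel (ambMetric gf) J I 0
            (fun I => if I = (0 : Fin (d + 2)) then s * x 0 else x I)
          * (if I = 0 then x 0 else 0) * x 0 := by
      intro I
      simp only [hder]
      simp [mul_ite, mul_zero, Finset.sum_ite_eq']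
    rw [Finset.sum_congr rfl fun I _ => hcol I]
    have hcol2 : (∑ I : Fin (d+2), Christoffel (ambMetric gf) J I 0
          (fun I => if I = (0 : Fin (d + 2)) then s * x 0 else x I)
          * (if I = 0 then x 0 else 0) * x 0)
        = Christoffel (ambMetric gf) J 0 0
            (fun I => if I = (0 : Fin (d + 2)) then s * x 0 else x I) * x 0 * x 0 := by
      simp [mul_ite, ite_mul, mul_zero, zero_mul, Finset.sum_ite_eq']
    rw [hcol2, christoffel_J00]
    simp
end
end

section
/- For n, d natural numbers with d ≥ 3 and real m ≥ 0, the determinant of the 2×2 matrix with rows ((2n - 2d - m)/2 · n, -dmn/f) and (nf²/2, nf(d + 2m - 2n)) — arising as the coefficient matrix of (g^{kl}ψ_{kl}, υ) in the order-n recursion for the weighted ambient metric — equals n² f (2n - d - m)(n - d - m) up to nonzero factors; in particular, it is nonzero if and only if n ∉ {(d+m)/2, d+m}. -/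
open Matrix BigOperators

noncomputable section

theorem det_ambientRecursionMatrix {K : Type*} [Field K] [NeZero (2 : K)] (n d m f : K)
    (hf : f ≠ 0) :
    det !![(2 * n - 2 * d - m) / 2 * n, -d * m * n / f;
           n * f ^ 2 / 2, n * f * (d + 2 * m - 2 * n)]
      = -(n ^ 2 * f * (2 * n - d - m) * (n - d - m)) := by
  rw [det_fin_two_of]
  field_simp
  ring

theorem resonance_factor_ne_zero_iff {K : Type*} [Field K] [NeZero (2 : K)] {n f : K}
    (hn : n ≠ 0) (hf : f ≠ 0) (d m : K) :
    n ^ 2 * f * (2 * n - d - m) * (n - d - m) ≠ 0 ↔ ¬(n = (d + m) / 2 ∨ n = d + m) := by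
  have h₁ : 2 * n - d - m = 0 ↔ n = (d + m) / 2 := by
    rw [eq_div_iff two_ne_zero, sub_sub, sub_eq_zero, mul_comm]
  have h₂ : n - d - m = 0 ↔ n = d + m := by rw [sub_sub, sub_eq_zero]
  simp only [ne_eq, mul_eq_zero, pow_eq_zero_iff two_ne_zero, hn, hf, h₁, h₂, false_or]

theorem ambient_recursion_determinant_general (n d : ℕ) (m f : ℝ)
    (hf : 0 < f) (hn : 1 ≤ n) :
    (∃ c : ℝ, c ≠ 0 ∧
      Matrix.det !![(2 * (n : ℝ) - 2 * d - m) / 2 * n, -(d : ℝ) * m * n / f;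
                    (n : ℝ) * f ^ 2 / 2, (n : ℝ) * f * ((d : ℝ) + 2 * m - 2 * n)]
        = c * ((n : ℝ) ^ 2 * f * (2 * n - d - m) * ((n : ℝ) - d - m)))
    ∧ (Matrix.det !![(2 * (n : ℝ) - 2 * d - m) / 2 * n, -(d : ℝ) * m * n / f;
                    (n : ℝ) * f ^ 2 / 2, (n : ℝ) * f * ((d : ℝ) + 2 * m - 2 * n)] ≠ 0
        ↔ ¬((n : ℝ) = ((d : ℝ) + m) / 2 ∨ (n : ℝ) = (d : ℝ) + m)) := by
  have hn₀ : (n : ℝ) ≠ 0 := Nat.cast_ne_zero.mpr (Nat.one_le_iff_ne_zero.mp hn)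
  rw [det_ambientRecursionMatrix _ _ _ _ hf.ne']
  exact ⟨⟨-1, by norm_num, by ring⟩,
    neg_ne_zero.trans (resonance_factor_ne_zero_iff hn₀ hf.ne' _ _)⟩

/-- The determinant of the coefficient matrix of `(g^{kl}ψ_{kl}, υ)` in the
order-`n` recursion for the weighted ambient metric equals, up to a nonzero factor,
`n² f (2n - d - m)(n - d - m)`; in particular it is nonzero iff `n ∉ {(d+m)/2, d+m}`. -/
theorem ambient_recursion_determinant (n d : ℕ) (m f : ℝ)
    (hd : 3 ≤ d) (hm : 0 ≤ m) (hf : 0 < f) (hn : 1 ≤ n) :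
    (∃ c : ℝ, c ≠ 0 ∧
      Matrix.det !![(2 * (n : ℝ) - 2 * d - m) / 2 * n, -(d : ℝ) * m * n / f;
                    (n : ℝ) * f ^ 2 / 2, (n : ℝ) * f * ((d : ℝ) + 2 * m - 2 * n)]
        = c * ((n : ℝ) ^ 2 * f * (2 * n - d - m) * ((n : ℝ) - d - m)))
    ∧ (Matrix.det !![(2 * (n : ℝ) - 2 * d - m) / 2 * n, -(d : ℝ) * m * n / f;
                    (n : ℝ) * f ^ 2 / 2, (n : ℝ) * f * ((d : ℝ) + 2 * m - 2 * n)] ≠ 0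
        ↔ ¬((n : ℝ) = ((d : ℝ) + m) / 2 ∨ (n : ℝ) = (d : ℝ) + m)) :=
  ambient_recursion_determinant_general n d m f hf hn
end
end
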